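/- arXiv:2301.07882 — 6 statements merged into one kernel-verified Lean document; each statement's English description precedes it below -/
import Mathlib

section
/- Let μ be a finite Borel measure on ℝ^d with compact support Ω, let X ∈ ℝ^d \ Ω, and suppose y_X ∈ Ω is the unique minimizer of y ↦ ‖y − X‖ over Ω. Suppose there exist n < d, ε₀ > 0, an open set U ⊆ ℝⁿ, an injective continuous map φ : U → ℝ^d, and a measurable function ρ : U → ℝ with 0 < ρ₀ ≤ ρ(z) ≤ ρ₁ < ∞ for all z ∈ U, such that B_{ε₀} := {y ∈ Ω : ‖y − X‖ < ‖y_X − X‖ + ε₀} ⊆ φ(U), the restriction of μ to B_{ε₀} equals the pushforward under φ of the measure ρ(z) dz (Lebesgue measure on ℝⁿ restricted to φ⁻¹(B_{ε₀})), and φ⁻¹(B_ε) has positive Lebesgue measure for every ε ∈ (0, ε₀], where B_ε := {y ∈ Ω : ‖y − X‖ < ‖y_X − X‖ + ε}. Then lim_{t→0⁺} t · S_μ(X,t) = X − y_X; in particular ‖S_μ(X,t)‖ → ∞ as t → 0⁺. -/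
open MeasureTheory Real Filter Topology

noncomputable section

/-- The (topological) support of a Borel measure: points all of whose open
neighborhoods have positive measure. -/
def msupport {α : Type*} [TopologicalSpace α] [MeasurableSpace α] (μ : Measure α) : Set α :=
  {x | ∀ U : Set α, IsOpen U → x ∈ U → 0 < μ U}

/-- The Gaussian weight `exp(-‖X - y e^{-t/2}‖² / (2 (1 - e^{-t})))`. -/
def gkernel {d : ℕ} (X y : EuclideanSpace ℝ (Fin d)) (t : ℝ) : ℝ :=
  Real.exp (-‖X - Real.exp (-t / 2) • y‖ ^ 2 / (2 * (1 - Real.exp (-t))))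

/-- `p_μ(X,t) = ∫ exp(-‖X - y e^{-t/2}‖²/(2(1-e^{-t}))) dμ(y)`. -/
def pfun {d : ℕ} (μ : Measure (EuclideanSpace ℝ (Fin d)))
    (X : EuclideanSpace ℝ (Fin d)) (t : ℝ) : ℝ :=
  ∫ y, gkernel X y t ∂μ

/-- The score function
`S_μ(X,t) = (∫ ((X - y e^{-t/2})/(1-e^{-t})) exp(-‖X - y e^{-t/2}‖²/(2(1-e^{-t}))) dμ(y)) / p_μ(X,t)`. -/
def score {d : ℕ} (μ : Measure (EuclideanSpace ℝ (Fin d)))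
    (X : EuclideanSpace ℝ (Fin d)) (t : ℝ) : EuclideanSpace ℝ (Fin d) :=
  (pfun μ X t)⁻¹ •
    ∫ y, ((1 - Real.exp (-t))⁻¹ * gkernel X y t) • (X - Real.exp (-t / 2) • y) ∂μ

/-- The denoiser
`f_μ(X,t) = (∫ y exp(-‖X - y e^{-t/2}‖²/(2(1-e^{-t}))) dμ(y)) / p_μ(X,t)`. -/
def denoiser {d : ℕ} (μ : Measure (EuclideanSpace ℝ (Fin d)))
    (X : EuclideanSpace ℝ (Fin d)) (t : ℝ) : EuclideanSpace ℝ (Fin d) :=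
  (pfun μ X t)⁻¹ • ∫ y, (gkernel X y t) • y ∂μ

/-- The set of points of `Ω` whose distance to `X` is within `ε` of the minimal
distance `‖yX - X‖`. -/
def nearSet {d : ℕ} (Ω : Set (EuclideanSpace ℝ (Fin d)))
    (X yX : EuclideanSpace ℝ (Fin d)) (ε : ℝ) : Set (EuclideanSpace ℝ (Fin d)) :=
  {y ∈ Ω | ‖y - X‖ < ‖yX - X‖ + ε}

/- ### Auxiliary lemmas -/

lemma isClosed_msupport {d : ℕ} (μ : Measure (EuclideanSpace ℝ (Fin d))) :
    IsClosed (msupport μ) := by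
  rw [← isOpen_compl_iff, isOpen_iff_mem_nhds]
  intro x hx
  simp only [msupport, Set.mem_compl_iff, Set.mem_setOf_eq, not_forall] at hx
  obtain ⟨V, hVopen, hxV, hV⟩ := hx
  refine Filter.mem_of_superset (hVopen.mem_nhds hxV) ?_
  intro z hz
  simp only [msupport, Set.mem_compl_iff, Set.mem_setOf_eq, not_forall]
  exact ⟨V, hVopen, hz, hV⟩

lemma measure_msupport_compl {d : ℕ} (μ : Measure (EuclideanSpace ℝ (Fin d))) :
    μ (msupport μ)ᶜ = 0 := by
  classical
  obtain ⟨T, hTc, hTeq⟩ := TopologicalSpace.isOpen_iUnion_countable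
    (fun V : {V : Set (EuclideanSpace ℝ (Fin d)) // IsOpen V ∧ μ V = 0} =>
      (V : Set (EuclideanSpace ℝ (Fin d)))) (fun V => V.2.1)
  have hcover : (msupport μ)ᶜ ⊆
      ⋃ V : {V : Set (EuclideanSpace ℝ (Fin d)) // IsOpen V ∧ μ V = 0},
        (V : Set (EuclideanSpace ℝ (Fin d))) := by
    intro x hx
    simp only [msupport, Set.mem_compl_iff, Set.mem_setOf_eq, not_forall] at hx
    obtain ⟨V, hVopen, hxV, hV⟩ := hx
    have hV0 : μ V = 0 := by
      by_contra h
      exact hV (lt_of_le_of_ne zero_le (Ne.symm h))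
    exact Set.mem_iUnion.mpr ⟨⟨V, hVopen, hV0⟩, hxV⟩
  refine measure_mono_null hcover ?_
  rw [← hTeq, measure_biUnion_null_iff hTc]
  exact fun V _ => V.2.2

lemma sigma_pos {t : ℝ} (ht : 0 < t) : 0 < 1 - Real.exp (-t) := by
  have : Real.exp (-t) < 1 := Real.exp_lt_one_iff.mpr (by linarith)
  linarith

lemma gkernel_nonneg {d : ℕ} (X y : EuclideanSpace ℝ (Fin d)) (t : ℝ) :
    0 ≤ gkernel X y t := (Real.exp_pos _).le

lemma gkernel_le_one {d : ℕ} (X y : EuclideanSpace ℝ (Fin d)) {t : ℝ} (ht : 0 < t) :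
    gkernel X y t ≤ 1 := by
  apply Real.exp_le_one_iff.mpr
  apply div_nonpos_of_nonpos_of_nonneg
  · simp [sq_nonneg]
  · have := sigma_pos ht; linarith

lemma gkernel_continuous {d : ℕ} (X : EuclideanSpace ℝ (Fin d)) (t : ℝ) :
    Continuous (fun y : EuclideanSpace ℝ (Fin d) => gkernel X y t) := by
  unfold gkernel
  exact Real.continuous_exp.comp
    (by fun_prop)

lemma gkernel_integrable {d : ℕ} (μ : Measure (EuclideanSpace ℝ (Fin d))) [IsFiniteMeasure μ]
    (X : EuclideanSpace ℝ (Fin d)) {t : ℝ} (ht : 0 < t) :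
    Integrable (fun y => gkernel X y t) μ := by
  refine (integrable_const (1 : ℝ)).mono'
    (gkernel_continuous X t).aestronglyMeasurable (ae_of_all _ fun y => ?_)
  rw [Real.norm_eq_abs, abs_of_nonneg (gkernel_nonneg X y t)]
  exact gkernel_le_one X y ht

lemma gkernel_le {d : ℕ} {X y : EuclideanSpace ℝ (Fin d)} {t b : ℝ} (ht : 0 < t)
    (hb : 0 ≤ b) (h : b ≤ ‖X - Real.exp (-t / 2) • y‖) :
    gkernel X y t ≤ Real.exp (-b ^ 2 / (2 * (1 - Real.exp (-t)))) := by
  apply Real.exp_le_exp.mpr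
  have hσ : (0:ℝ) < 2 * (1 - Real.exp (-t)) := by have := sigma_pos ht; linarith
  exact (div_le_div_iff_of_pos_right hσ).mpr (neg_le_neg (pow_le_pow_left₀ hb h 2))

lemma gkernel_ge {d : ℕ} {X y : EuclideanSpace ℝ (Fin d)} {t b : ℝ} (ht : 0 < t)
    (h : ‖X - Real.exp (-t / 2) • y‖ ≤ b) :
    Real.exp (-b ^ 2 / (2 * (1 - Real.exp (-t)))) ≤ gkernel X y t := by
  apply Real.exp_le_exp.mpr
  have hσ : (0:ℝ) < 2 * (1 - Real.exp (-t)) := by have := sigma_pos ht; linarith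
  exact (div_le_div_iff_of_pos_right hσ).mpr (neg_le_neg (pow_le_pow_left₀ (norm_nonneg _) h 2))

lemma norm_shift_lower {d : ℕ} (X y : EuclideanSpace ℝ (Fin d)) {a : ℝ} (ha : a ≤ 1) :
    ‖X - y‖ - (1 - a) * ‖y‖ ≤ ‖X - a • y‖ := by
  have hxy : X - y = (X - a • y) - (1 - a) • y := by
    rw [sub_smul, one_smul]; abel
  have := norm_sub_le (X - a • y) ((1 - a) • y)
  rw [← hxy] at this
  rw [norm_smul, Real.norm_eq_abs, abs_of_nonneg (by linarith)] at this
  linarith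

lemma norm_shift_upper {d : ℕ} (X y : EuclideanSpace ℝ (Fin d)) {a : ℝ} (ha : a ≤ 1) :
    ‖X - a • y‖ ≤ ‖X - y‖ + (1 - a) * ‖y‖ := by
  have hxy : X - a • y = (X - y) + (1 - a) • y := by
    rw [sub_smul, one_smul]; abel
  have := norm_add_le (X - y) ((1 - a) • y)
  rw [← hxy, norm_smul, Real.norm_eq_abs, abs_of_nonneg (by linarith)] at this
  linarith
set_option maxHeartbeats 1000000 in
/-- **Singularity of the score function** for data measures supported on a lower
dimensional set: `t · S_μ(X,t) → X - y_X` as `t → 0⁺`, hence `‖S_μ(X,t)‖ → ∞`. -/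
theorem score_singularity {d n : ℕ} (hnd : n < d)
    (μ : Measure (EuclideanSpace ℝ (Fin d))) [IsFiniteMeasure μ]
    (hcompact : IsCompact (msupport μ))
    (X : EuclideanSpace ℝ (Fin d)) (hX : X ∉ msupport μ)
    (yX : EuclideanSpace ℝ (Fin d)) (hyX : yX ∈ msupport μ)
    (hmin : ∀ y ∈ msupport μ, ‖yX - X‖ ≤ ‖y - X‖)
    (huniq : ∀ y ∈ msupport μ, ‖y - X‖ = ‖yX - X‖ → y = yX)
    (ε₀ : ℝ) (hε₀ : 0 < ε₀)
    (U : Set (EuclideanSpace ℝ (Fin n))) (hU : IsOpen U)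
    (φ : EuclideanSpace ℝ (Fin n) → EuclideanSpace ℝ (Fin d))
    (hφinj : Set.InjOn φ U) (hφcont : ContinuousOn φ U)
    (ρ : EuclideanSpace ℝ (Fin n) → ℝ) (hρmeas : Measurable ρ)
    (ρ₀ ρ₁ : ℝ) (hρ₀pos : 0 < ρ₀)
    (hρbound : ∀ z ∈ U, ρ₀ ≤ ρ z ∧ ρ z ≤ ρ₁)
    (hchart : nearSet (msupport μ) X yX ε₀ ⊆ φ '' U)
    (hrestrict : μ.restrict (nearSet (msupport μ) X yX ε₀) =
      Measure.map φ ((volume.withDensity (fun z => ENNReal.ofReal (ρ z))).restrict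
        (φ ⁻¹' (nearSet (msupport μ) X yX ε₀) ∩ U)))
    (hpos : ∀ ε : ℝ, 0 < ε → ε ≤ ε₀ →
      0 < volume (φ ⁻¹' (nearSet (msupport μ) X yX ε) ∩ U)) :
    Tendsto (fun t => t • score μ X t) (𝓝[>] (0 : ℝ)) (𝓝 (X - yX)) ∧
    Tendsto (fun t => ‖score μ X t‖) (𝓝[>] (0 : ℝ)) atTop := by
  classical
  set Ω := msupport μ with hΩdef
  have hnull : μ Ωᶜ = 0 := measure_msupport_compl μ
  have haeΩ : ∀ᵐ y ∂μ, y ∈ Ω := by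
    rw [MeasureTheory.ae_iff]
    exact hnull
  have hXy : yX ≠ X := fun h => hX (h ▸ hyX)
  set r := ‖yX - X‖ with hrdef
  have hr : 0 < r := by
    rw [hrdef, norm_pos_iff, sub_ne_zero]; exact hXy
  obtain ⟨M, hM⟩ : ∃ M, ∀ y ∈ Ω, ‖y‖ ≤ M :=
    isBounded_iff_forall_norm_le.mp hcompact.isBounded
  have hM0 : 0 ≤ M := le_trans (norm_nonneg yX) (hM yX hyX)
  have hμuniv : 0 < μ Set.univ := hyX Set.univ isOpen_univ (Set.mem_univ _)
  -- positivity of near sets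
  have hnearMeas : ∀ ε : ℝ, MeasurableSet (nearSet Ω X yX ε) := by
    intro ε
    have : nearSet Ω X yX ε = Ω ∩ {y | ‖y - X‖ < r + ε} := rfl
    rw [this]
    exact (isClosed_msupport μ).measurableSet.inter
      (isOpen_lt ((continuous_id.sub continuous_const).norm) continuous_const).measurableSet
  have hnear : ∀ ε : ℝ, 0 < ε → 0 < (μ (nearSet Ω X yX ε)).toReal := by
    intro ε hε
    have hopen : IsOpen {y : EuclideanSpace ℝ (Fin d) | ‖y - X‖ < r + ε} :=
      isOpen_lt ((continuous_id.sub continuous_const).norm) continuous_const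
    have hmem : yX ∈ {y : EuclideanSpace ℝ (Fin d) | ‖y - X‖ < r + ε} := by
      simp only [Set.mem_setOf_eq, ← hrdef]; linarith
    have h1 : 0 < μ {y : EuclideanSpace ℝ (Fin d) | ‖y - X‖ < r + ε} := hyX _ hopen hmem
    have h2 : {y : EuclideanSpace ℝ (Fin d) | ‖y - X‖ < r + ε} ⊆
        nearSet Ω X yX ε ∪ Ωᶜ := by
      intro y hy
      by_cases hyΩ : y ∈ Ω
      · exact Or.inl ⟨hyΩ, hy⟩
      · exact Or.inr hyΩ
    have h3 : 0 < μ (nearSet Ω X yX ε) := by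
      by_contra h
      push_neg at h
      have h0 : μ (nearSet Ω X yX ε) = 0 := le_antisymm h zero_le
      have : μ {y : EuclideanSpace ℝ (Fin d) | ‖y - X‖ < r + ε} = 0 :=
        measure_mono_null h2 (measure_union_null h0 hnull)
      rw [this] at h1; exact lt_irrefl _ h1
    exact ENNReal.toReal_pos h3.ne' (measure_ne_top μ _)
  -- positivity of pfun
  have hp : ∀ t : ℝ, 0 < t → 0 < pfun μ X t := by
    intro t ht
    rw [pfun, integral_pos_iff_support_of_nonneg
      (fun y => gkernel_nonneg X y t) (gkernel_integrable μ X ht)]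
    have hsupp : Function.support (fun y => gkernel X y t) = Set.univ :=
      Set.eq_univ_of_forall fun y => (Real.exp_pos _).ne'
    rw [hsupp]; exact hμuniv
  -- integrability of g • y and g * ‖y - yX‖
  have hgyI : ∀ t : ℝ, 0 < t →
      Integrable (fun y => gkernel X y t • y) μ := by
    intro t ht
    refine (integrable_const M).mono'
      (((gkernel_continuous X t).smul continuous_id).aestronglyMeasurable) ?_
    filter_upwards [haeΩ] with y hy
    rw [norm_smul, Real.norm_eq_abs, abs_of_nonneg (gkernel_nonneg X y t)]
    calc gkernel X y t * ‖y‖ ≤ 1 * ‖y‖ :=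
          mul_le_mul_of_nonneg_right (gkernel_le_one X y ht) (norm_nonneg y)
      _ = ‖y‖ := one_mul _
      _ ≤ M := hM y hy
  have hgnI : ∀ t : ℝ, 0 < t →
      Integrable (fun y => gkernel X y t * ‖y - yX‖) μ := by
    intro t ht
    refine (integrable_const (M + ‖yX‖)).mono'
      (((gkernel_continuous X t).mul
        ((continuous_id.sub continuous_const).norm)).aestronglyMeasurable) ?_
    filter_upwards [haeΩ] with y hy
    rw [Real.norm_eq_abs, abs_of_nonneg
      (mul_nonneg (gkernel_nonneg X y t) (norm_nonneg _))]
    calc gkernel X y t * ‖y - yX‖ ≤ 1 * ‖y - yX‖ :=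
          mul_le_mul_of_nonneg_right (gkernel_le_one X y ht) (norm_nonneg _)
      _ = ‖y - yX‖ := one_mul _
      _ ≤ ‖y‖ + ‖yX‖ := norm_sub_le y yX
      _ ≤ M + ‖yX‖ := by have := hM y hy; linarith
  -- the denoiser converges to yX
  have hden : Tendsto (fun t => denoiser μ X t) (𝓝[>] (0:ℝ)) (𝓝 yX) := by
    rw [Metric.tendsto_nhds]
    intro δ hδ
    -- choose ε such that points of Ω almost minimizing the distance are close to yX
    obtain ⟨ε, hεpos, hεprop⟩ : ∃ ε, 0 < ε ∧ ∀ y ∈ Ω, ‖y - X‖ < r + ε → ‖y - yX‖ ≤ δ/4 := by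
      by_cases hK : (Ω ∩ {y | δ/4 ≤ ‖y - yX‖}).Nonempty
      · have hKcl : IsClosed {y : EuclideanSpace ℝ (Fin d) | δ/4 ≤ ‖y - yX‖} :=
          isClosed_le continuous_const ((continuous_id.sub continuous_const).norm)
        have hKcomp : IsCompact (Ω ∩ {y | δ/4 ≤ ‖y - yX‖}) := hcompact.inter_right hKcl
        have hcn : ContinuousOn (fun y : EuclideanSpace ℝ (Fin d) => ‖y - X‖)
            (Ω ∩ {y | δ/4 ≤ ‖y - yX‖}) :=
          ((continuous_id.sub continuous_const).norm).continuousOn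
        obtain ⟨y₁, hy₁mem, hy₁min⟩ := hKcomp.exists_isMinOn hK hcn
        have hy₁ : r < ‖y₁ - X‖ := by
          rcases lt_or_eq_of_le (hmin y₁ hy₁mem.1) with h | h
          · exact h
          · exfalso
            have heq := huniq y₁ hy₁mem.1 h.symm
            have h2 := hy₁mem.2
            rw [heq] at h2
            simp only [Set.mem_setOf_eq, sub_self, norm_zero] at h2
            linarith
        refine ⟨‖y₁ - X‖ - r, by linarith, ?_⟩
        intro y hy hylt
        by_contra hcon
        push_neg at hcon
        have hmem2 : y ∈ Ω ∩ {y | δ/4 ≤ ‖y - yX‖} := ⟨hy, le_of_lt hcon⟩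
        have h3 := hy₁min hmem2
        simp only [Set.mem_setOf_eq] at h3
        linarith
      · refine ⟨1, one_pos, fun y hy _ => ?_⟩
        by_contra hcon
        push_neg at hcon
        exact hK ⟨y, hy, le_of_lt hcon⟩
    have hm : 0 < (μ (nearSet Ω X yX (ε/2))).toReal := hnear (ε/2) (by linarith)
    set m := (μ (nearSet Ω X yX (ε/2))).toReal with hmdef
    have hA0 : 0 ≤ M + ‖yX‖ := by have := norm_nonneg yX; linarith
    have hμT : 0 < (μ Set.univ).toReal :=
      ENNReal.toReal_pos hμuniv.ne' (measure_ne_top μ _)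
    set μT := (μ Set.univ).toReal with hμTdef
    set C := (M + ‖yX‖) * μT / m with hCdef
    have hC0 : 0 ≤ C := by
      rw [hCdef]
      exact div_nonneg (mul_nonneg hA0 hμT.le) hm.le
    set K₀ := (r + 7*ε/8)^2 - (r + 5*ε/8)^2 with hK₀def
    have hK₀ : 0 < K₀ := by rw [hK₀def]; nlinarith [hr, hεpos]
    -- the key quantitative estimate
    have key : ∀ t : ℝ, 0 < t → (1 - Real.exp (-t/2)) * M ≤ ε/8 →
        dist (denoiser μ X t) yX ≤ δ/4 + C * Real.exp (-K₀ / (2 * (1 - Real.exp (-t)))) := by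
      intro t ht hsmall
      have hpt := hp t ht
      have hσ := sigma_pos ht
      have ha1 : Real.exp (-t/2) ≤ 1 := Real.exp_le_one_iff.mpr (by linarith)
      -- Step A: denoiser - yX as an integral
      have hstepA : denoiser μ X t - yX =
          (pfun μ X t)⁻¹ • ∫ y, gkernel X y t • (y - yX) ∂μ := by
        have hsub : (fun y : EuclideanSpace ℝ (Fin d) => gkernel X y t • (y - yX))
            = fun y => gkernel X y t • y - gkernel X y t • yX := by
          funext y; rw [smul_sub]
        have hpfun : (∫ y, gkernel X y t ∂μ) = pfun μ X t := rfl
        rw [hsub, integral_sub (hgyI t ht) ((gkernel_integrable μ X ht).smul_const yX),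
          integral_smul_const, hpfun, denoiser, smul_sub, smul_smul,
          inv_mul_cancel₀ hpt.ne', one_smul]
      -- Step B: norm bound
      have hstepB : dist (denoiser μ X t) yX ≤
          (pfun μ X t)⁻¹ * ∫ y, gkernel X y t * ‖y - yX‖ ∂μ := by
        rw [dist_eq_norm, hstepA, norm_smul, Real.norm_eq_abs, abs_of_pos (inv_pos.mpr hpt)]
        apply mul_le_mul_of_nonneg_left ?_ (inv_pos.mpr hpt).le
        calc ‖∫ y, gkernel X y t • (y - yX) ∂μ‖
            ≤ ∫ y, ‖gkernel X y t • (y - yX)‖ ∂μ := norm_integral_le_integral_norm _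
          _ = ∫ y, gkernel X y t * ‖y - yX‖ ∂μ := by
              congr 1; funext y
              rw [norm_smul, Real.norm_eq_abs, abs_of_nonneg (gkernel_nonneg X y t)]
      -- Step D: upper bound on the numerator
      have hstepD : ∫ y, gkernel X y t * ‖y - yX‖ ∂μ ≤
          δ/4 * pfun μ X t +
            (M + ‖yX‖) * Real.exp (-(r + 7*ε/8)^2 / (2 * (1 - Real.exp (-t)))) * μT := by
        have hptw : ∀ᵐ y ∂μ, gkernel X y t * ‖y - yX‖ ≤
            δ/4 * gkernel X y t +
              (M + ‖yX‖) * Real.exp (-(r + 7*ε/8)^2 / (2 * (1 - Real.exp (-t)))) := by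
          filter_upwards [haeΩ] with y hy
          by_cases hcase : ‖y - X‖ < r + ε
          · have h1 : ‖y - yX‖ ≤ δ/4 := hεprop y hy hcase
            have h2 : gkernel X y t * ‖y - yX‖ ≤ gkernel X y t * (δ/4) :=
              mul_le_mul_of_nonneg_left h1 (gkernel_nonneg X y t)
            have h3 : 0 ≤ (M + ‖yX‖) * Real.exp (-(r + 7*ε/8)^2 / (2 * (1 - Real.exp (-t)))) :=
              mul_nonneg hA0 (Real.exp_pos _).le
            have h2' : gkernel X y t * ‖y - yX‖ ≤ δ/4 * gkernel X y t := by
              rw [mul_comm (δ/4)]; exact h2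
            linarith
          · push_neg at hcase
            have hyM := hM y hy
            have hlow := norm_shift_lower X y ha1
            have hnorm : ‖X - y‖ = ‖y - X‖ := norm_sub_rev X y
            have h3 : (1 - Real.exp (-t/2)) * ‖y‖ ≤ ε/8 := by
              calc (1 - Real.exp (-t/2)) * ‖y‖ ≤ (1 - Real.exp (-t/2)) * M :=
                    mul_le_mul_of_nonneg_left hyM (by linarith)
                _ ≤ ε/8 := hsmall
            have hdist : r + 7*ε/8 ≤ ‖X - Real.exp (-t/2) • y‖ := by linarith
            have hg : gkernel X y t ≤
                Real.exp (-(r + 7*ε/8)^2 / (2 * (1 - Real.exp (-t)))) :=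
              gkernel_le ht (by linarith) hdist
            have hyn : ‖y - yX‖ ≤ M + ‖yX‖ := by
              have h4 := norm_sub_le y yX; linarith
            have h5 : gkernel X y t * ‖y - yX‖ ≤
                Real.exp (-(r + 7*ε/8)^2 / (2 * (1 - Real.exp (-t)))) * (M + ‖yX‖) :=
              mul_le_mul hg hyn (norm_nonneg _) (Real.exp_pos _).le
            have h6 : 0 ≤ δ/4 * gkernel X y t :=
              mul_nonneg (by linarith) (gkernel_nonneg X y t)
            have h5' : gkernel X y t * ‖y - yX‖ ≤
                (M + ‖yX‖) * Real.exp (-(r + 7*ε/8)^2 / (2 * (1 - Real.exp (-t)))) := by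
              rw [mul_comm (M + ‖yX‖)]; exact h5
            linarith
        calc ∫ y, gkernel X y t * ‖y - yX‖ ∂μ
            ≤ ∫ y, (δ/4 * gkernel X y t +
                (M + ‖yX‖) * Real.exp (-(r + 7*ε/8)^2 / (2 * (1 - Real.exp (-t))))) ∂μ := by
              apply integral_mono_ae (hgnI t ht) ?_ hptw
              exact ((gkernel_integrable μ X ht).const_mul _).add (integrable_const _)
          _ = δ/4 * pfun μ X t +
              (M + ‖yX‖) * Real.exp (-(r + 7*ε/8)^2 / (2 * (1 - Real.exp (-t)))) * μT := by
              rw [integral_add ((gkernel_integrable μ X ht).const_mul _) (integrable_const _),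
                integral_const_mul, integral_const, smul_eq_mul, measureReal_def]
              have hpfun : (∫ y, gkernel X y t ∂μ) = pfun μ X t := rfl
              rw [hpfun, hμTdef]
              ring
      -- Step E: lower bound on pfun
      have hstepE : Real.exp (-(r + 5*ε/8)^2 / (2 * (1 - Real.exp (-t)))) * m ≤ pfun μ X t := by
        have hsub : ∫ y in nearSet Ω X yX (ε/2), gkernel X y t ∂μ ≤ pfun μ X t :=
          setIntegral_le_integral (gkernel_integrable μ X ht)
            (ae_of_all _ fun y => gkernel_nonneg X y t)
        have hconst : Real.exp (-(r + 5*ε/8)^2 / (2 * (1 - Real.exp (-t)))) * m ≤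
            ∫ y in nearSet Ω X yX (ε/2), gkernel X y t ∂μ := by
          rw [hmdef]
          apply setIntegral_ge_of_const_le_real (hnearMeas (ε/2)) (measure_ne_top μ _)
          · intro y hy
            apply gkernel_ge ht
            obtain ⟨hyΩ, hylt⟩ := hy
            rw [← hrdef] at hylt
            have hup := norm_shift_upper X y ha1
            have hnorm : ‖X - y‖ = ‖y - X‖ := norm_sub_rev X y
            have h3 : (1 - Real.exp (-t/2)) * ‖y‖ ≤ ε/8 := by
              calc (1 - Real.exp (-t/2)) * ‖y‖ ≤ (1 - Real.exp (-t/2)) * M :=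
                    mul_le_mul_of_nonneg_left (hM y hyΩ) (by linarith)
                _ ≤ ε/8 := hsmall
            linarith
          · exact (gkernel_integrable μ X ht).integrableOn
        linarith
      -- combine
      have hfrac : (pfun μ X t)⁻¹ *
          ((M + ‖yX‖) * Real.exp (-(r + 7*ε/8)^2 / (2 * (1 - Real.exp (-t)))) * μT) ≤
          C * Real.exp (-K₀ / (2 * (1 - Real.exp (-t)))) := by
        have hE₂m : 0 < Real.exp (-(r + 5*ε/8)^2 / (2 * (1 - Real.exp (-t)))) * m :=
          mul_pos (Real.exp_pos _) hm
        have hstep : (pfun μ X t)⁻¹ ≤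
            (Real.exp (-(r + 5*ε/8)^2 / (2 * (1 - Real.exp (-t)))) * m)⁻¹ :=
          inv_anti₀ hE₂m hstepE
        have h5 : 0 ≤ (M + ‖yX‖) * Real.exp (-(r + 7*ε/8)^2 / (2 * (1 - Real.exp (-t)))) * μT :=
          mul_nonneg (mul_nonneg hA0 (Real.exp_pos _).le) hμT.le
        calc (pfun μ X t)⁻¹ *
            ((M + ‖yX‖) * Real.exp (-(r + 7*ε/8)^2 / (2 * (1 - Real.exp (-t)))) * μT)
            ≤ (Real.exp (-(r + 5*ε/8)^2 / (2 * (1 - Real.exp (-t)))) * m)⁻¹ *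
              ((M + ‖yX‖) * Real.exp (-(r + 7*ε/8)^2 / (2 * (1 - Real.exp (-t)))) * μT) :=
              mul_le_mul_of_nonneg_right hstep h5
          _ = C * (Real.exp (-(r + 7*ε/8)^2 / (2 * (1 - Real.exp (-t)))) /
              Real.exp (-(r + 5*ε/8)^2 / (2 * (1 - Real.exp (-t))))) := by
              rw [hCdef]
              field_simp
          _ = C * Real.exp (-K₀ / (2 * (1 - Real.exp (-t)))) := by
              rw [← Real.exp_sub]
              congr 1
              rw [hK₀def]
              field_simp
              ring
      have hid : (pfun μ X t)⁻¹ * (δ/4 * pfun μ X t) = δ/4 := by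
        field_simp
      calc dist (denoiser μ X t) yX
          ≤ (pfun μ X t)⁻¹ * ∫ y, gkernel X y t * ‖y - yX‖ ∂μ := hstepB
        _ ≤ (pfun μ X t)⁻¹ * (δ/4 * pfun μ X t +
            (M + ‖yX‖) * Real.exp (-(r + 7*ε/8)^2 / (2 * (1 - Real.exp (-t)))) * μT) :=
            mul_le_mul_of_nonneg_left hstepD (inv_pos.mpr hpt).le
        _ = δ/4 + (pfun μ X t)⁻¹ *
            ((M + ‖yX‖) * Real.exp (-(r + 7*ε/8)^2 / (2 * (1 - Real.exp (-t)))) * μT) := by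
            rw [mul_add, hid]
        _ ≤ δ/4 + C * Real.exp (-K₀ / (2 * (1 - Real.exp (-t)))) := by linarith
    -- the tail term tends to 0
    have htail : Tendsto (fun t : ℝ => C * Real.exp (-K₀ / (2 * (1 - Real.exp (-t)))))
        (𝓝[>] (0:ℝ)) (𝓝 0) := by
      have hσt : Tendsto (fun t : ℝ => 1 - Real.exp (-t)) (𝓝[>] (0:ℝ)) (𝓝[>] (0:ℝ)) := by
        rw [tendsto_nhdsWithin_iff]
        constructor
        · have hcont : Continuous fun t : ℝ => 1 - Real.exp (-t) :=
            continuous_const.sub (Real.continuous_exp.comp continuous_neg)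
          have h := hcont.tendsto 0
          simp only [neg_zero, Real.exp_zero, sub_self] at h
          exact h.mono_left nhdsWithin_le_nhds
        · filter_upwards [self_mem_nhdsWithin] with t ht
          exact sigma_pos ht
      have hinv : Tendsto (fun s : ℝ => -K₀ / (2 * s)) (𝓝[>] (0:ℝ)) atBot := by
        have h1 : Tendsto (fun s : ℝ => (-K₀/2) * s⁻¹) (𝓝[>] (0:ℝ)) atBot :=
          (tendsto_const_mul_atBot_of_neg (div_neg_of_neg_of_pos (neg_lt_zero.mpr hK₀) two_pos)).mpr tendsto_inv_nhdsGT_zero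
        refine h1.congr fun s => ?_
        field_simp
      have hexp : Tendsto (fun t : ℝ => Real.exp (-K₀ / (2 * (1 - Real.exp (-t)))))
          (𝓝[>] (0:ℝ)) (𝓝 0) :=
        Real.tendsto_exp_atBot.comp (hinv.comp hσt)
      have := hexp.const_mul C
      simpa using this
    -- finish
    have hev1 : ∀ᶠ t in 𝓝[>] (0:ℝ), (1 - Real.exp (-t/2)) * M ≤ ε/8 := by
      have hcont : Continuous fun t : ℝ => (1 - Real.exp (-t/2)) * M :=
        (continuous_const.sub (Real.continuous_exp.comp (continuous_neg.div_const 2))).mul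
          continuous_const
      have h := hcont.tendsto 0
      simp only [neg_zero, zero_div, Real.exp_zero, sub_self, zero_mul] at h
      exact (h.mono_left nhdsWithin_le_nhds).eventually
        (eventually_le_nhds (by linarith : (0:ℝ) < ε/8))
    have hev2 : ∀ᶠ t in 𝓝[>] (0:ℝ),
        C * Real.exp (-K₀ / (2 * (1 - Real.exp (-t)))) < δ/2 :=
      htail.eventually (eventually_lt_nhds (by linarith : (0:ℝ) < δ/2))
    filter_upwards [self_mem_nhdsWithin, hev1, hev2] with t ht h1 h2
    have hkey := key t ht h1
    have : dist (denoiser μ X t) yX < δ/4 + δ/2 := by linarith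
    linarith
  -- score in terms of denoiser
  have hscore : ∀ t : ℝ, 0 < t → score μ X t =
      (1 - Real.exp (-t))⁻¹ • (X - Real.exp (-t/2) • denoiser μ X t) := by
    intro t ht
    have hpt := hp t ht
    have hgI := gkernel_integrable μ X ht
    have hgyIt := hgyI t ht
    rw [score, denoiser]
    have hinteq : (fun y : EuclideanSpace ℝ (Fin d) =>
        ((1 - Real.exp (-t))⁻¹ * gkernel X y t) • (X - Real.exp (-t / 2) • y))
        = fun y => (1 - Real.exp (-t))⁻¹ •
          (gkernel X y t • X - Real.exp (-t/2) • (gkernel X y t • y)) := by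
      funext y
      module
    have h2 : Integrable (fun y => Real.exp (-t/2) • (gkernel X y t • y)) μ := hgyIt.smul (Real.exp (-t/2))
    rw [hinteq, integral_smul, integral_sub (hgI.smul_const X) h2,
      integral_smul_const, integral_smul]
    have hpfun : (∫ y, gkernel X y t ∂μ) = pfun μ X t := rfl
    rw [hpfun, smul_comm]
    congr 1
    rw [smul_sub, smul_smul, inv_mul_cancel₀ hpt.ne', one_smul, smul_comm]
  -- t/(1 - e^{-t}) → 1
  have hA : Tendsto (fun t : ℝ => t * (1 - Real.exp (-t))⁻¹) (𝓝[>] (0:ℝ)) (𝓝 1) := by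
    have hder : HasDerivAt (fun t : ℝ => 1 - Real.exp (-t)) 1 0 := by
      have h1 : HasDerivAt (fun t : ℝ => Real.exp (-t)) (-1) 0 := by
        have := (Real.hasDerivAt_exp (-0)).comp 0 (hasDerivAt_neg (0:ℝ))
        simp at this; exact this
      have := (hasDerivAt_const (0:ℝ) (1:ℝ)).sub h1
      simp at this; exact this
    have hslope : Tendsto (fun t : ℝ => (1 - Real.exp (-t)) / t) (𝓝[≠] (0:ℝ)) (𝓝 1) := by
      have h := hasDerivAt_iff_tendsto_slope.mp hder
      refine h.congr fun t => ?_
      simp [slope_def_field, div_eq_mul_inv]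
    have hslope' : Tendsto (fun t : ℝ => (1 - Real.exp (-t)) / t) (𝓝[>] (0:ℝ)) (𝓝 1) :=
      hslope.mono_left (nhdsWithin_mono 0 fun t ht => ne_of_gt ht)
    have hinv := hslope'.inv₀ one_ne_zero
    rw [inv_one] at hinv
    refine hinv.congr' ?_
    filter_upwards [self_mem_nhdsWithin] with t ht
    rw [inv_div, div_eq_mul_inv]
  -- first conclusion
  have h1 : Tendsto (fun t => t • score μ X t) (𝓝[>] (0 : ℝ)) (𝓝 (X - yX)) := by
    have heq : ∀ᶠ t in 𝓝[>] (0:ℝ), t • score μ X t =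
        (t * (1 - Real.exp (-t))⁻¹) • (X - Real.exp (-t/2) • denoiser μ X t) := by
      filter_upwards [self_mem_nhdsWithin] with t ht
      rw [hscore t ht, smul_smul]
    rw [tendsto_congr' heq]
    have hB : Tendsto (fun t : ℝ => X - Real.exp (-t/2) • denoiser μ X t)
        (𝓝[>] (0:ℝ)) (𝓝 (X - (1:ℝ) • yX)) := by
      apply Tendsto.sub tendsto_const_nhds
      apply Tendsto.smul ?_ hden
      have : Tendsto (fun t : ℝ => Real.exp (-t/2)) (𝓝 (0:ℝ)) (𝓝 1) := by
        have := (Real.continuous_exp.comp ((continuous_neg).div_const 2)).tendsto 0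
        convert this using 2 <;> simp [Function.comp_def]
      exact this.mono_left nhdsWithin_le_nhds
    have := hA.smul hB
    simpa using this
  refine ⟨h1, ?_⟩
  -- second conclusion
  have heq2 : ∀ᶠ t in 𝓝[>] (0:ℝ), ‖score μ X t‖ = ‖t • score μ X t‖ * t⁻¹ := by
    filter_upwards [self_mem_nhdsWithin] with t ht
    have ht' : (0:ℝ) < t := ht
    rw [norm_smul, Real.norm_eq_abs, abs_of_pos ht']
    field_simp
  rw [tendsto_congr' heq2]
  have hnormpos : 0 < ‖X - yX‖ := by
    rw [norm_pos_iff, sub_ne_zero]; exact fun h => hXy h.symm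
  exact Tendsto.pos_mul_atTop hnormpos h1.norm tendsto_inv_nhdsGT_zero
end
end

section
/- Let x₁, …, x_K be distinct points in ℝ^d, let w₁, …, w_K > 0, and let X ∈ ℝ^d be such that there is an index j with ‖X − x_j‖ < ‖X − x_i‖ for all i ≠ j. For the atomic measure μ = Σ_{i=1}^K w_i δ_{x_i}, the denoiser satisfies f_μ(X,t) = (Σ_{i=1}^K x_i w_i exp(−‖X − x_i e^{−t/2}‖²/(2(1−e^{−t})))) / (Σ_{i=1}^K w_i exp(−‖X − x_i e^{−t/2}‖²/(2(1−e^{−t})))), and lim_{t→0⁺} f_μ(X,t) = x_j; consequently lim_{t→0⁺} t · S_μ(X,t) = X − x_j. -/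
open MeasureTheory Real Filter Topology

noncomputable section

/-- Any strongly measurable function is integrable w.r.t. a Dirac measure. -/
lemma integrable_dirac'' {α E : Type*} [MeasurableSpace α] [MeasurableSingletonClass α]
    [NormedAddCommGroup E] {f : α → E} (hf : StronglyMeasurable f) (a : α) :
    Integrable f (Measure.dirac a) := by
  refine ⟨hf.aestronglyMeasurable, ?_⟩
  rw [HasFiniteIntegral, lintegral_dirac]
  exact ENNReal.coe_lt_top

/-- Integral against a finite atomic measure is a weighted sum. -/
lemma integral_atomic {d K : ℕ} {F : Type*} [NormedAddCommGroup F] [NormedSpace ℝ F]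
    [CompleteSpace F] (w : Fin K → ℝ) (hw : ∀ i, 0 ≤ w i)
    (x : Fin K → EuclideanSpace ℝ (Fin d))
    (g : EuclideanSpace ℝ (Fin d) → F) (hg : Continuous g) :
    ∫ y, g y ∂(∑ i, (ENNReal.ofReal (w i)) • Measure.dirac (x i)) = ∑ i, w i • g (x i) := by
  rw [integral_finset_sum_measure (fun i _ =>
    (integrable_dirac'' hg.stronglyMeasurable (x i)).smul_measure ENNReal.ofReal_ne_top)]
  refine Finset.sum_congr rfl fun i _ => ?_
  rw [integral_smul_measure, integral_dirac, ENNReal.toReal_ofReal (hw i)]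

/-- softmax limit lemma -/
lemma softmax_tendsto {d K : ℕ} (g : Fin K → ℝ → ℝ) (hgpos : ∀ i t, 0 < g i t) (j : Fin K)
    (hratio : ∀ i, i ≠ j → Tendsto (fun t => g i t / g j t) (𝓝[>] (0:ℝ)) (𝓝 0))
    (v : Fin K → ℝ → EuclideanSpace ℝ (Fin d)) (vl : Fin K → EuclideanSpace ℝ (Fin d))
    (hv : ∀ i, Tendsto (v i) (𝓝[>] (0:ℝ)) (𝓝 (vl i))) :
    Tendsto (fun t => (∑ i, g i t)⁻¹ • ∑ i, (g i t) • v i t) (𝓝[>] (0:ℝ)) (𝓝 (vl j)) := by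
  have heq : ∀ t, (∑ i, g i t)⁻¹ • ∑ i, (g i t) • v i t
      = (∑ i, g i t / g j t)⁻¹ • ∑ i, (g i t / g j t) • v i t := by
    intro t
    have hgj : g j t ≠ 0 := (hgpos j t).ne'
    have hsum : (0:ℝ) < ∑ i, g i t :=
      Finset.sum_pos (fun i _ => hgpos i t) ⟨j, Finset.mem_univ j⟩
    have h1 : ∑ i, (g i t / g j t) • v i t = (g j t)⁻¹ • ∑ i, g i t • v i t := by
      rw [Finset.smul_sum]
      exact Finset.sum_congr rfl fun i _ => by rw [smul_smul, inv_mul_eq_div]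
    rw [h1, ← Finset.sum_div, smul_smul]
    congr 1
    field_simp
  have hD : Tendsto (fun t => ∑ i, g i t / g j t) (𝓝[>] (0:ℝ)) (𝓝 1) := by
    have h : Tendsto (fun t => ∑ i, g i t / g j t) (𝓝[>] (0:ℝ))
        (𝓝 (∑ i, if i = j then (1:ℝ) else 0)) := by
      refine tendsto_finset_sum _ fun i _ => ?_
      by_cases hij : i = j
      · subst hij
        simp only [if_pos rfl]
        exact tendsto_const_nhds.congr fun t => (div_self (hgpos i t).ne').symm
      · simpa only [if_neg hij] using hratio i hij
    simpa using h
  have hN : Tendsto (fun t => ∑ i, (g i t / g j t) • v i t) (𝓝[>] (0:ℝ)) (𝓝 (vl j)) := by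
    have h : Tendsto (fun t => ∑ i, (g i t / g j t) • v i t) (𝓝[>] (0:ℝ))
        (𝓝 (∑ i, if i = j then vl j else 0)) := by
      refine tendsto_finset_sum _ fun i _ => ?_
      by_cases hij : i = j
      · subst hij
        simp only [if_pos rfl]
        refine (hv i).congr fun t => ?_
        rw [div_self (hgpos i t).ne', one_smul]
      · simp only [if_neg hij]
        have h0 := (hratio i hij).smul (hv i)
        simpa using h0
    simpa using h
  have hfinal := (hD.inv₀ one_ne_zero).smul hN
  rw [inv_one, one_smul] at hfinal
  exact hfinal.congr fun t => (heq t).symm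

/-- For an atomic measure `μ = Σ wᵢ δ_{xᵢ}` with distinct atoms, the denoiser has an
explicit softmax form, tends to the closest atom `x_j` as `t → 0⁺`, and
`t · S_μ(X,t) → X - x_j`. -/
theorem denoiser_point_cloud {d K : ℕ}
    (x : Fin K → EuclideanSpace ℝ (Fin d)) (hx : Function.Injective x)
    (w : Fin K → ℝ) (hw : ∀ i, 0 < w i)
    (X : EuclideanSpace ℝ (Fin d)) (j : Fin K)
    (hj : ∀ i, i ≠ j → ‖X - x j‖ < ‖X - x i‖)
    (μ : Measure (EuclideanSpace ℝ (Fin d)))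
    (hμ : μ = ∑ i, (ENNReal.ofReal (w i)) • Measure.dirac (x i)) :
    (∀ t : ℝ, 0 < t → denoiser μ X t =
      (∑ i, w i * gkernel X (x i) t)⁻¹ • ∑ i, (w i * gkernel X (x i) t) • x i) ∧
    Tendsto (fun t => denoiser μ X t) (𝓝[>] (0 : ℝ)) (𝓝 (x j)) ∧
    Tendsto (fun t => t • score μ X t) (𝓝[>] (0 : ℝ)) (𝓝 (X - x j)) := by

  have hwle : ∀ i, 0 ≤ w i := fun i => (hw i).le
  have hgpos : ∀ i t, 0 < w i * gkernel X (x i) t :=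
    fun i t => mul_pos (hw i) (Real.exp_pos _)
  have hck : ∀ t : ℝ, Continuous fun y : EuclideanSpace ℝ (Fin d) => gkernel X y t := by
    intro t; unfold gkernel; fun_prop
  have hP : ∀ t, pfun μ X t = ∑ i, w i * gkernel X (x i) t := by
    intro t
    rw [pfun, hμ, integral_atomic w hwle x _ (hck t)]
    rfl
  have hNum : ∀ t, (∫ y, (gkernel X y t) • y ∂μ) = ∑ i, (w i * gkernel X (x i) t) • x i := by
    intro t
    rw [hμ, integral_atomic w hwle x (fun y => gkernel X y t • y) ((hck t).smul continuous_id)]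
    exact Finset.sum_congr rfl fun i _ => smul_smul _ _ _
  have part1 : ∀ t : ℝ, denoiser μ X t =
      (∑ i, w i * gkernel X (x i) t)⁻¹ • ∑ i, (w i * gkernel X (x i) t) • x i := by
    intro t; rw [denoiser, hP, hNum]
  -- ratio limit
  have hratio : ∀ i, i ≠ j →
      Tendsto (fun t => (w i * gkernel X (x i) t) / (w j * gkernel X (x j) t))
        (𝓝[>] (0:ℝ)) (𝓝 0) := by
    intro i hij
    have hkey : Tendsto (fun t => gkernel X (x i) t / gkernel X (x j) t) (𝓝[>] (0:ℝ)) (𝓝 0) := by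
      have heq : ∀ t, gkernel X (x i) t / gkernel X (x j) t =
          Real.exp ((‖X - Real.exp (-t/2) • x j‖^2 - ‖X - Real.exp (-t/2) • x i‖^2) *
            (2 * (1 - Real.exp (-t)))⁻¹) := by
        intro t
        rw [gkernel, gkernel, ← Real.exp_sub, div_sub_div_same, ← div_eq_mul_inv]
        ring_nf
      simp only [heq]
      apply Real.tendsto_exp_atBot.comp
      have hq : Tendsto (fun t : ℝ => ‖X - Real.exp (-t/2) • x j‖^2 - ‖X - Real.exp (-t/2) • x i‖^2)
          (𝓝[>] (0:ℝ)) (𝓝 (‖X - x j‖^2 - ‖X - x i‖^2)) := by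
        have hc : Continuous fun t : ℝ =>
            ‖X - Real.exp (-t/2) • x j‖^2 - ‖X - Real.exp (-t/2) • x i‖^2 := by fun_prop
        have h0 := hc.tendsto 0
        simp only [neg_zero, zero_div, Real.exp_zero, one_smul] at h0
        exact h0.mono_left nhdsWithin_le_nhds
      have hneg : ‖X - x j‖^2 - ‖X - x i‖^2 < 0 := by
        have h1 := hj i hij
        nlinarith [norm_nonneg (X - x j), norm_nonneg (X - x i)]
      have hcinv : Tendsto (fun t : ℝ => (2 * (1 - Real.exp (-t)))⁻¹) (𝓝[>] (0:ℝ)) atTop := by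
        apply tendsto_inv_nhdsGT_zero.comp
        apply tendsto_nhdsWithin_of_tendsto_nhds_of_eventually_within
        · have hc : Continuous fun t : ℝ => 2 * (1 - Real.exp (-t)) := by fun_prop
          have h0 := hc.tendsto 0
          simp only [neg_zero, Real.exp_zero, sub_self, mul_zero] at h0
          exact h0.mono_left nhdsWithin_le_nhds
        · filter_upwards [self_mem_nhdsWithin] with t ht
          have h1 : Real.exp (-t) < 1 := by
            rw [show (1:ℝ) = Real.exp 0 by simp]
            exact Real.exp_lt_exp.mpr (by simpa using ht)
          simp only [Set.mem_Ioi]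
          nlinarith
      exact hq.neg_mul_atTop hneg hcinv
    have h := hkey.const_mul (w i / w j)
    rw [mul_zero] at h
    exact h.congr fun t => (mul_div_mul_comm (w i) (gkernel X (x i) t) (w j) _).symm
  -- part 2
  have hpart2 : Tendsto (fun t => denoiser μ X t) (𝓝[>] (0 : ℝ)) (𝓝 (x j)) := by
    have h := softmax_tendsto (fun i t => w i * gkernel X (x i) t) hgpos j hratio
      (fun i _ => x i) x (fun i => tendsto_const_nhds)
    exact h.congr fun t => (part1 t).symm
  refine ⟨fun t _ => part1 t, hpart2, ?_⟩
  -- part 3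
  have hSc : ∀ t, (∫ y, ((1 - Real.exp (-t))⁻¹ * gkernel X y t) • (X - Real.exp (-t/2) • y) ∂μ)
      = (1 - Real.exp (-t))⁻¹ •
        ∑ i, (w i * gkernel X (x i) t) • (X - Real.exp (-t/2) • x i) := by
    intro t
    rw [hμ, integral_atomic w hwle x _ (by unfold gkernel; fun_prop), Finset.smul_sum]
    refine Finset.sum_congr rfl fun i _ => ?_
    rw [smul_smul, smul_smul]
    congr 1
    ring
  have hscore : ∀ t, t • score μ X t = (t * (1 - Real.exp (-t))⁻¹) •
      ((∑ i, w i * gkernel X (x i) t)⁻¹ •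
        ∑ i, (w i * gkernel X (x i) t) • (X - Real.exp (-t/2) • x i)) := by
    intro t
    rw [score, hP, hSc]
    simp only [smul_smul]
    congr 1
    ring
  have hts : Tendsto (fun t : ℝ => t * (1 - Real.exp (-t))⁻¹) (𝓝[>] (0:ℝ)) (𝓝 1) := by
    have hd : HasDerivAt (fun t : ℝ => 1 - Real.exp (-t)) 1 0 := by
      have h1 : HasDerivAt (fun t : ℝ => Real.exp (-t)) (-1) 0 := by
        simpa using (hasDerivAt_neg (0:ℝ)).exp
      simpa using h1.const_sub (1:ℝ)
    have hs := hasDerivAt_iff_tendsto_slope.mp hd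
    have hs' := (hs.inv₀ one_ne_zero).mono_left
      (nhdsWithin_mono 0 fun t (ht : t ∈ Set.Ioi (0:ℝ)) => ne_of_gt ht)
    rw [inv_one] at hs'
    refine hs'.congr fun t => ?_
    rw [slope_def_field]
    simp only [neg_zero, Real.exp_zero, sub_self, sub_zero]
    rw [inv_div, div_eq_mul_inv]
  have hsoft := softmax_tendsto (fun i t => w i * gkernel X (x i) t) hgpos j hratio
    (fun i t => X - Real.exp (-t/2) • x i) (fun i => X - x i) ?_
  · have h := hts.smul hsoft
    rw [one_smul] at h
    exact h.congr fun t => (hscore t).symm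
  · intro i
    have hc : Continuous fun t : ℝ => X - Real.exp (-t/2) • x i := by fun_prop
    have h0 := hc.tendsto 0
    simp only [neg_zero, zero_div, Real.exp_zero, one_smul] at h0
    exact h0.mono_left nhdsWithin_le_nhds
end
end

section
/- Let ρ₀ be a finite Borel measure on ℝ^d, σ > 0, and let μ be the convolution of ρ₀ with the centered Gaussian measure N(0, σ² I_d), i.e. μ has density y ↦ ∫_{ℝ^d} (2πσ²)^{−d/2} exp(−‖y − z‖²/(2σ²)) dρ₀(z) with respect to Lebesgue measure. Then for every t > 0 and X ∈ ℝ^d, the score satisfies S_μ(X,t) = (∫_{ℝ^d} ((X − z e^{−t/2})/(σ² e^{−t} + 1 − e^{−t})) · exp(−‖X − z e^{−t/2}‖²/(2(σ² e^{−t} + 1 − e^{−t}))) dρ₀(z)) / (∫_{ℝ^d} exp(−‖X − z e^{−t/2}‖²/(2(σ² e^{−t} + 1 − e^{−t}))) dρ₀(z)). -/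
open MeasureTheory Real Filter Topology
open scoped ENNReal NNReal

noncomputable section

section AuxLemmas

variable {d : ℕ}

lemma aux_integrable_gauss (c : ℝ) (hc : 0 < c) :
    Integrable (fun v : EuclideanSpace ℝ (Fin d) => rexp (-c * ‖v‖ ^ 2)) := by
  have h := (GaussianFourier.integrable_cexp_neg_mul_sq_norm_add
      (V := EuclideanSpace ℝ (Fin d)) (b := (c : ℂ)) (by simpa using hc) 0 0).norm
  refine h.congr (Filter.Eventually.of_forall fun v => ?_)
  simp [Complex.norm_exp]
  left; norm_cast

lemma aux_integral_gauss (c : ℝ) (hc : 0 < c) :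
    ∫ v : EuclideanSpace ℝ (Fin d), rexp (-c * ‖v‖ ^ 2) = (π / c) ^ ((d : ℝ) / 2) := by
  rw [GaussianFourier.integral_rexp_neg_mul_sq_norm hc, finrank_euclideanSpace_fin]

lemma aux_integrable_gauss_shift (c : ℝ) (hc : 0 < c) (m : EuclideanSpace ℝ (Fin d)) :
    Integrable (fun v : EuclideanSpace ℝ (Fin d) => rexp (-c * ‖v - m‖ ^ 2)) :=
  (aux_integrable_gauss c hc).comp_sub_right m

lemma aux_integral_gauss_shift (c : ℝ) (hc : 0 < c) (m : EuclideanSpace ℝ (Fin d)) :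
    ∫ v : EuclideanSpace ℝ (Fin d), rexp (-c * ‖v - m‖ ^ 2) = (π / c) ^ ((d : ℝ) / 2) := by
  rw [integral_sub_right_eq_self (fun u : EuclideanSpace ℝ (Fin d) => rexp (-c * ‖u‖ ^ 2)) m]
  exact aux_integral_gauss c hc

lemma aux_pointwise_bound (c r : ℝ) (hc : 0 < c) (hr : 0 ≤ r) :
    r * rexp (-c * r ^ 2) ≤ Real.sqrt c⁻¹ * rexp (-(c / 2) * r ^ 2) := by
  have h1 : c * r ^ 2 ≤ rexp (c * r ^ 2) :=
    (le_add_of_nonneg_right zero_le_one).trans (Real.add_one_le_exp _)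
  have h2 : r ≤ Real.sqrt c⁻¹ * rexp (c / 2 * r ^ 2) := by
    calc r = Real.sqrt (r ^ 2) := (Real.sqrt_sq hr).symm
      _ ≤ Real.sqrt (c⁻¹ * rexp (c * r ^ 2)) := by
          apply Real.sqrt_le_sqrt
          rw [inv_mul_eq_div, le_div_iff₀ hc]
          linarith [h1]
      _ = Real.sqrt c⁻¹ * Real.sqrt (rexp (c * r ^ 2)) := Real.sqrt_mul (by positivity) _
      _ = Real.sqrt c⁻¹ * rexp (c / 2 * r ^ 2) := by
          rw [show c * r ^ 2 = c / 2 * r ^ 2 + c / 2 * r ^ 2 by ring, Real.exp_add,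
            Real.sqrt_mul_self (Real.exp_pos _).le]
  calc r * rexp (-c * r ^ 2) ≤ (Real.sqrt c⁻¹ * rexp (c / 2 * r ^ 2)) * rexp (-c * r ^ 2) :=
        mul_le_mul_of_nonneg_right h2 (Real.exp_pos _).le
    _ = Real.sqrt c⁻¹ * rexp (-(c / 2) * r ^ 2) := by
        rw [mul_assoc, ← Real.exp_add]; ring_nf

lemma aux_integrable_gauss_smul (c : ℝ) (hc : 0 < c) :
    Integrable (fun v : EuclideanSpace ℝ (Fin d) => rexp (-c * ‖v‖ ^ 2) • v) := by
  refine Integrable.mono'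
    ((aux_integrable_gauss (d := d) (c / 2) (by positivity)).const_mul (Real.sqrt c⁻¹))
    ?_ ?_
  · apply Continuous.aestronglyMeasurable; fun_prop
  · filter_upwards with v
    rw [norm_smul, Real.norm_eq_abs, abs_of_pos (Real.exp_pos _), mul_comm]
    exact aux_pointwise_bound c ‖v‖ hc (norm_nonneg v)

lemma aux_moment_zero (c : ℝ) :
    ∫ v : EuclideanSpace ℝ (Fin d), rexp (-c * ‖v‖ ^ 2) • v = 0 := by
  have h := integral_neg_eq_self (fun v : EuclideanSpace ℝ (Fin d) => rexp (-c * ‖v‖ ^ 2) • v)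
    volume
  simp only [norm_neg, smul_neg] at h
  rw [integral_neg] at h
  have h2 : (2 : ℝ) • ∫ v : EuclideanSpace ℝ (Fin d), rexp (-c * ‖v‖ ^ 2) • v = 0 := by
    rw [two_smul]
    nth_rewrite 1 [← h]
    simp
  rcases smul_eq_zero.1 h2 with h3 | h3
  · norm_num at h3
  · exact h3

lemma aux_integrable_gauss_smul_add (c : ℝ) (hc : 0 < c) (m : EuclideanSpace ℝ (Fin d)) :
    Integrable (fun u : EuclideanSpace ℝ (Fin d) => rexp (-c * ‖u‖ ^ 2) • (u + m)) := by
  have h := (aux_integrable_gauss_smul c hc).add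
    ((aux_integrable_gauss (d := d) c hc).smul_const m)
  exact h.congr (Filter.Eventually.of_forall fun u => by simp [smul_add])

lemma aux_integrable_gauss_smul_shift (c : ℝ) (hc : 0 < c) (m : EuclideanSpace ℝ (Fin d)) :
    Integrable (fun v : EuclideanSpace ℝ (Fin d) => rexp (-c * ‖v - m‖ ^ 2) • v) := by
  have h := (aux_integrable_gauss_smul_add c hc m).comp_sub_right m
  exact h.congr (Filter.Eventually.of_forall fun v => by simp)

lemma aux_integral_gauss_smul_shift (c : ℝ) (hc : 0 < c) (m : EuclideanSpace ℝ (Fin d)) :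
    ∫ v : EuclideanSpace ℝ (Fin d), rexp (-c * ‖v - m‖ ^ 2) • v
      = ((π / c) ^ ((d : ℝ) / 2)) • m := by
  have e : ∀ v : EuclideanSpace ℝ (Fin d),
      rexp (-c * ‖v - m‖ ^ 2) • v
        = (fun u : EuclideanSpace ℝ (Fin d) => rexp (-c * ‖u‖ ^ 2) • (u + m)) (v - m) := by
    intro v; simp
  rw [funext e, integral_sub_right_eq_self
    (fun u : EuclideanSpace ℝ (Fin d) => rexp (-c * ‖u‖ ^ 2) • (u + m)) m]
  have : ∀ u : EuclideanSpace ℝ (Fin d), rexp (-c * ‖u‖ ^ 2) • (u + m)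
      = rexp (-c * ‖u‖ ^ 2) • u + rexp (-c * ‖u‖ ^ 2) • m := fun u => smul_add _ _ _
  rw [funext this, integral_add (aux_integrable_gauss_smul c hc)
    ((aux_integrable_gauss (d := d) c hc).smul_const m), aux_moment_zero,
    integral_smul_const, aux_integral_gauss c hc, zero_add]

lemma aux_sq_complete (a b σ : ℝ) (hb : 0 < b) (hσ : 0 < σ) (P Q R U V W : ℝ) :
    -(Q - 2 * W + R) / (2 * σ ^ 2) + -(P - 2 * (a * U) + a ^ 2 * Q) / (2 * b)
      = -(P - 2 * (a * V) + a ^ 2 * R) / (2 * (a ^ 2 * σ ^ 2 + b))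
        + -((a ^ 2 * σ ^ 2 + b) / (2 * b * σ ^ 2))
          * (Q - 2 * ((a ^ 2 * σ ^ 2 + b)⁻¹ * (a * σ ^ 2 * U + b * W))
             + ((a ^ 2 * σ ^ 2 + b)⁻¹) ^ 2
               * ((a * σ ^ 2) ^ 2 * P + 2 * (a * σ ^ 2 * b * V) + b ^ 2 * R)) := by
  have hs : a ^ 2 * σ ^ 2 + b ≠ 0 := by positivity
  field_simp
  ring

lemma aux_complete_square (a b σ : ℝ) (hb : 0 < b) (hσ : 0 < σ)
    (X z y : EuclideanSpace ℝ (Fin d)) :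
    rexp (-‖y - z‖ ^ 2 / (2 * σ ^ 2)) * rexp (-‖X - a • y‖ ^ 2 / (2 * b))
      = rexp (-‖X - a • z‖ ^ 2 / (2 * (a ^ 2 * σ ^ 2 + b)))
        * rexp (-((a ^ 2 * σ ^ 2 + b) / (2 * b * σ ^ 2))
            * ‖y - (a ^ 2 * σ ^ 2 + b)⁻¹ • ((a * σ ^ 2) • X + b • z)‖ ^ 2) := by
  rw [← Real.exp_add, ← Real.exp_add]
  congr 1
  have hsm : ∀ (t : ℝ) (w : EuclideanSpace ℝ (Fin d)), ‖t • w‖ ^ 2 = t ^ 2 * ‖w‖ ^ 2 := by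
    intro t w
    rw [norm_smul, mul_pow, Real.norm_eq_abs, sq_abs]
  have e1 : ‖y - z‖ ^ 2 = ‖y‖ ^ 2 - 2 * (inner ℝ y z : ℝ) + ‖z‖ ^ 2 := norm_sub_sq_real y z
  have e2 : ‖X - a • y‖ ^ 2 = ‖X‖ ^ 2 - 2 * (a * (inner ℝ X y : ℝ)) + a ^ 2 * ‖y‖ ^ 2 := by
    rw [norm_sub_sq_real, real_inner_smul_right, hsm]
  have e3 : ‖X - a • z‖ ^ 2 = ‖X‖ ^ 2 - 2 * (a * (inner ℝ X z : ℝ)) + a ^ 2 * ‖z‖ ^ 2 := by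
    rw [norm_sub_sq_real, real_inner_smul_right, hsm]
  have e4 : ‖y - (a ^ 2 * σ ^ 2 + b)⁻¹ • ((a * σ ^ 2) • X + b • z)‖ ^ 2
      = ‖y‖ ^ 2 - 2 * ((a ^ 2 * σ ^ 2 + b)⁻¹ * (a * σ ^ 2 * (inner ℝ X y : ℝ)
          + b * (inner ℝ y z : ℝ)))
        + ((a ^ 2 * σ ^ 2 + b)⁻¹) ^ 2
            * ((a * σ ^ 2) ^ 2 * ‖X‖ ^ 2 + 2 * (a * σ ^ 2 * b * (inner ℝ X z : ℝ))
              + b ^ 2 * ‖z‖ ^ 2) := by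
    rw [norm_sub_sq_real, hsm, norm_add_sq_real, hsm, hsm, real_inner_smul_right,
      inner_add_right, real_inner_smul_right, real_inner_smul_right,
      real_inner_smul_left, real_inner_smul_right, real_inner_comm y X]
    ring
  rw [e1, e2, e3, e4]
  exact aux_sq_complete a b σ hb hσ (‖X‖ ^ 2) (‖y‖ ^ 2) (‖z‖ ^ 2) _ _ _

lemma aux_integrable_norm_gauss (c : ℝ) (hc : 0 < c) (m : EuclideanSpace ℝ (Fin d)) :
    Integrable (fun v : EuclideanSpace ℝ (Fin d) => ‖v - m‖ * rexp (-c * ‖v - m‖ ^ 2)) := by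
  have h := ((aux_integrable_gauss_smul (d := d) c hc).norm).comp_sub_right m
  exact h.congr (Filter.Eventually.of_forall fun v => by
    simp [norm_smul, abs_of_pos (Real.exp_pos _), mul_comm])

lemma aux_integral_gauss_linear (c : ℝ) (hc : 0 < c) (a : ℝ)
    (m X : EuclideanSpace ℝ (Fin d)) :
    ∫ v : EuclideanSpace ℝ (Fin d), rexp (-c * ‖v - m‖ ^ 2) • (X - a • v)
      = ((π / c) ^ ((d : ℝ) / 2)) • (X - a • m) := by
  have e : ∀ v : EuclideanSpace ℝ (Fin d),
      rexp (-c * ‖v - m‖ ^ 2) • (X - a • v)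
        = rexp (-c * ‖v - m‖ ^ 2) • X - a • (rexp (-c * ‖v - m‖ ^ 2) • v) := by
    intro v; rw [smul_sub, smul_comm]
  have h2 : Integrable
      (fun v : EuclideanSpace ℝ (Fin d) => a • (rexp (-c * ‖v - m‖ ^ 2) • v)) volume := by
    exact (aux_integrable_gauss_smul_shift c hc m).smul a
  rw [funext e, integral_sub ((aux_integrable_gauss_shift c hc m).smul_const X) h2,
    integral_smul_const, integral_smul, aux_integral_gauss_shift c hc,
    aux_integral_gauss_smul_shift c hc, smul_sub, smul_comm]

lemma aux_fubini {F : Type*} [NormedAddCommGroup F] [NormedSpace ℝ F] [CompleteSpace F]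
    (ρ₀ : Measure (EuclideanSpace ℝ (Fin d))) [IsFiniteMeasure ρ₀] (σ C : ℝ)
    (hσ : 0 < σ) (hC : 0 ≤ C)
    (g : EuclideanSpace ℝ (Fin d) → F) (hg_cont : Continuous g)
    (φ : EuclideanSpace ℝ (Fin d) → ℝ) (hφ : Integrable φ)
    (hbound : ∀ y, ‖g y‖ ≤ φ y) :
    ∫ y, g y ∂(volume.withDensity (fun y => ENNReal.ofReal
        (∫ z, C * rexp (-‖y - z‖ ^ 2 / (2 * σ ^ 2)) ∂ρ₀)))
      = ∫ z, (∫ y, (C * rexp (-‖y - z‖ ^ 2 / (2 * σ ^ 2))) • g y) ∂ρ₀ := by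
  have hψc : Continuous (fun p : EuclideanSpace ℝ (Fin d) × EuclideanSpace ℝ (Fin d) =>
      C * rexp (-‖p.1 - p.2‖ ^ 2 / (2 * σ ^ 2))) := by fun_prop
  have hψ_nonneg : ∀ p : EuclideanSpace ℝ (Fin d) × EuclideanSpace ℝ (Fin d),
      0 ≤ C * rexp (-‖p.1 - p.2‖ ^ 2 / (2 * σ ^ 2)) := fun p => by positivity
  have hψ_le : ∀ p : EuclideanSpace ℝ (Fin d) × EuclideanSpace ℝ (Fin d),
      C * rexp (-‖p.1 - p.2‖ ^ 2 / (2 * σ ^ 2)) ≤ C := by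
    intro p
    have h1 : rexp (-‖p.1 - p.2‖ ^ 2 / (2 * σ ^ 2)) ≤ 1 := by
      rw [← Real.exp_zero]
      apply Real.exp_le_exp.2
      rw [neg_div]
      exact neg_nonpos_of_nonneg (by positivity)
    nlinarith
  have hh_nonneg : ∀ y, 0 ≤ ∫ z, C * rexp (-‖y - z‖ ^ 2 / (2 * σ ^ 2)) ∂ρ₀ :=
    fun y => integral_nonneg fun z => hψ_nonneg (y, z)
  have hh_meas : Measurable fun y =>
      (∫ z, C * rexp (-‖y - z‖ ^ 2 / (2 * σ ^ 2)) ∂ρ₀).toNNReal :=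
    (hψc.stronglyMeasurable.integral_prod_right').measurable.real_toNNReal
  have hrw : (fun y => ENNReal.ofReal (∫ z, C * rexp (-‖y - z‖ ^ 2 / (2 * σ ^ 2)) ∂ρ₀))
      = fun y => (((∫ z, C * rexp (-‖y - z‖ ^ 2 / (2 * σ ^ 2)) ∂ρ₀).toNNReal : ℝ≥0) : ℝ≥0∞) :=
    rfl
  rw [hrw, integral_withDensity_eq_integral_smul hh_meas g]
  have step1 : ∀ y, ((∫ z, C * rexp (-‖y - z‖ ^ 2 / (2 * σ ^ 2)) ∂ρ₀).toNNReal : ℝ≥0) • g y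
      = ∫ z, (C * rexp (-‖y - z‖ ^ 2 / (2 * σ ^ 2))) • g y ∂ρ₀ := by
    intro y
    rw [NNReal.smul_def, Real.coe_toNNReal _ (hh_nonneg y), ← integral_smul_const]
  rw [funext step1]
  -- now swap the order of integration
  have hF_cont : Continuous (fun p : EuclideanSpace ℝ (Fin d) × EuclideanSpace ℝ (Fin d) =>
      (C * rexp (-‖p.1 - p.2‖ ^ 2 / (2 * σ ^ 2))) • g p.1) := by fun_prop
  have hint : Integrable (Function.uncurry
      (fun y z : EuclideanSpace ℝ (Fin d) => (C * rexp (-‖y - z‖ ^ 2 / (2 * σ ^ 2))) • g y))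
      (volume.prod ρ₀) := by
    refine (integrable_prod_iff hF_cont.aestronglyMeasurable).2 ⟨?_, ?_⟩
    · refine Filter.Eventually.of_forall fun y => ?_
      refine Integrable.mono' (integrable_const (C * ‖g y‖))
        ((Continuous.aestronglyMeasurable (by fun_prop))) ?_
      filter_upwards with z
      rw [norm_smul, Real.norm_eq_abs, abs_of_nonneg (hψ_nonneg (y, z))]
      exact mul_le_mul_of_nonneg_right (hψ_le (y, z)) (norm_nonneg _)
    · have hmeas2 : AEStronglyMeasurable
          (fun y => ∫ z, ‖(C * rexp (-‖y - z‖ ^ 2 / (2 * σ ^ 2))) • g y‖ ∂ρ₀) volume :=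
        (hF_cont.norm.stronglyMeasurable.integral_prod_right').aestronglyMeasurable
      refine Integrable.mono' (hφ.const_mul (C * (ρ₀ Set.univ).toReal)) hmeas2 ?_
      filter_upwards with y
      rw [Real.norm_eq_abs, abs_of_nonneg (integral_nonneg fun z => norm_nonneg _)]
      have hφy : 0 ≤ φ y := le_trans (norm_nonneg _) (hbound y)
      calc ∫ z, ‖(C * rexp (-‖y - z‖ ^ 2 / (2 * σ ^ 2))) • g y‖ ∂ρ₀
          ≤ ∫ _z, C * φ y ∂ρ₀ := by
            refine integral_mono_of_nonneg (Filter.Eventually.of_forall fun z => norm_nonneg _)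
              (integrable_const _) (Filter.Eventually.of_forall fun z => ?_)
            dsimp only
            rw [norm_smul, Real.norm_eq_abs, abs_of_nonneg (hψ_nonneg (y, z))]
            exact mul_le_mul (hψ_le (y, z)) (hbound y) (norm_nonneg _) hC
        _ = C * (ρ₀ Set.univ).toReal * φ y := by
            rw [integral_const, smul_eq_mul, measureReal_def]; ring
  exact integral_integral_swap hint

lemma aux_norm_affine' (a : ℝ) (ha : 0 < a) (X y : EuclideanSpace ℝ (Fin d)) :
    ‖X - a • y‖ = a * ‖y - a⁻¹ • X‖ := by
  have h : X - a • y = a • (a⁻¹ • X - y) := by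
    rw [smul_sub, smul_smul, mul_inv_cancel₀ ha.ne', one_smul]
  rw [h, norm_smul, Real.norm_eq_abs, abs_of_pos ha, norm_sub_rev]

lemma aux_norm_affine (a : ℝ) (ha : 0 < a) (X y : EuclideanSpace ℝ (Fin d)) :
    ‖X - a • y‖ ^ 2 = a ^ 2 * ‖y - a⁻¹ • X‖ ^ 2 := by
  rw [aux_norm_affine' a ha X y, mul_pow]

lemma aux_mean_shift (a b σ s : ℝ) (hb : 0 < b) (hσ : 0 < σ) (hs_eq : s = a ^ 2 * σ ^ 2 + b)
    (X z : EuclideanSpace ℝ (Fin d)) :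
    X - a • (s⁻¹ • ((a * σ ^ 2) • X + b • z)) = (b / s) • (X - a • z) := by
  subst hs_eq
  have hs : a ^ 2 * σ ^ 2 + b ≠ 0 := by positivity
  match_scalars
  · field_simp
    ring
  · field_simp

end AuxLemmas

/-- For data measure `μ = ρ₀ * N(0, σ² I_d)` (convolution with a Gaussian), the score
is a conditional expectation with the inflated variance `σ² e^{-t} + 1 - e^{-t}`. -/
theorem score_gaussian_convolution {d : ℕ}
    (ρ₀ : Measure (EuclideanSpace ℝ (Fin d))) [IsFiniteMeasure ρ₀]
    (σ : ℝ) (hσ : 0 < σ)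
    (μ : Measure (EuclideanSpace ℝ (Fin d)))
    (hμ : μ = volume.withDensity (fun y => ENNReal.ofReal
      (∫ z, ((2 * π * σ ^ 2) ^ (-(d : ℝ) / 2)) *
        Real.exp (-‖y - z‖ ^ 2 / (2 * σ ^ 2)) ∂ρ₀)))
    (t : ℝ) (ht : 0 < t) (X : EuclideanSpace ℝ (Fin d)) :
    score μ X t =
      (∫ z, Real.exp (-‖X - Real.exp (-t / 2) • z‖ ^ 2 /
          (2 * (σ ^ 2 * Real.exp (-t) + 1 - Real.exp (-t)))) ∂ρ₀)⁻¹ •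
        ∫ z, ((σ ^ 2 * Real.exp (-t) + 1 - Real.exp (-t))⁻¹ *
            Real.exp (-‖X - Real.exp (-t / 2) • z‖ ^ 2 /
              (2 * (σ ^ 2 * Real.exp (-t) + 1 - Real.exp (-t))))) •
          (X - Real.exp (-t / 2) • z) ∂ρ₀ := by
  subst hμ
  simp only [score, pfun, gkernel]
  set a : ℝ := Real.exp (-t / 2) with ha_def
  have ha : 0 < a := Real.exp_pos _
  have ha2 : a ^ 2 = rexp (-t) := by
    rw [ha_def, sq, ← Real.exp_add]
    congr 1
    ring
  set s : ℝ := σ ^ 2 * Real.exp (-t) + 1 - Real.exp (-t) with hs_def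
  set b : ℝ := 1 - Real.exp (-t) with hb_def
  have hexp1 : rexp (-t) < 1 := by
    rw [← Real.exp_zero]
    exact Real.exp_lt_exp.2 (by linarith)
  have hb : 0 < b := by rw [hb_def]; linarith
  have hs_eq : s = a ^ 2 * σ ^ 2 + b := by rw [hs_def, hb_def, ha2]; ring
  have hs : 0 < s := by rw [hs_eq]; positivity
  set c : ℝ := s / (2 * b * σ ^ 2) with hc_def
  have hc : 0 < c := by rw [hc_def]; positivity
  set C : ℝ := (2 * π * σ ^ 2) ^ (-(d : ℝ) / 2) with hC_def
  have hC : 0 < C := Real.rpow_pos_of_pos (by positivity) _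
  set K : ℝ := C * (π / c) ^ ((d : ℝ) / 2) with hK_def
  have hK : 0 < K := mul_pos hC (Real.rpow_pos_of_pos (by positivity) _)
  -- the completed-square identity
  have hkey : ∀ z y : EuclideanSpace ℝ (Fin d),
      rexp (-‖y - z‖ ^ 2 / (2 * σ ^ 2)) * rexp (-‖X - a • y‖ ^ 2 / (2 * b))
        = rexp (-‖X - a • z‖ ^ 2 / (2 * s))
          * rexp (-c * ‖y - s⁻¹ • ((a * σ ^ 2) • X + b • z)‖ ^ 2) := by
    intro z y
    rw [hc_def, hs_eq]
    exact aux_complete_square a b σ hb hσ X z y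
  -- integrability data
  have hg1_int : Integrable (fun y : EuclideanSpace ℝ (Fin d) =>
      rexp (-‖X - a • y‖ ^ 2 / (2 * b))) := by
    refine (aux_integrable_gauss_shift (d := d) (a ^ 2 / (2 * b)) (by positivity)
      (a⁻¹ • X)).congr (Filter.Eventually.of_forall fun y => ?_)
    exact congrArg rexp (by rw [aux_norm_affine a ha X y]; ring)
  -- Claim 1 : the denominator
  have claim1 : (∫ y, rexp (-‖X - a • y‖ ^ 2 / (2 * b))
        ∂(volume.withDensity (fun y => ENNReal.ofReal
          (∫ z, C * rexp (-‖y - z‖ ^ 2 / (2 * σ ^ 2)) ∂ρ₀))))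
      = K * ∫ z, rexp (-‖X - a • z‖ ^ 2 / (2 * s)) ∂ρ₀ := by
    rw [aux_fubini ρ₀ σ C hσ hC.le _ (by fun_prop) _ hg1_int
      (fun y => by rw [Real.norm_eq_abs, abs_of_pos (Real.exp_pos _)])]
    have inner_eq : ∀ z : EuclideanSpace ℝ (Fin d),
        (∫ y, (C * rexp (-‖y - z‖ ^ 2 / (2 * σ ^ 2))) • rexp (-‖X - a • y‖ ^ 2 / (2 * b)))
          = K * rexp (-‖X - a • z‖ ^ 2 / (2 * s)) := by
      intro z
      have e : ∀ y : EuclideanSpace ℝ (Fin d),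
          (C * rexp (-‖y - z‖ ^ 2 / (2 * σ ^ 2))) • rexp (-‖X - a • y‖ ^ 2 / (2 * b))
            = (C * rexp (-‖X - a • z‖ ^ 2 / (2 * s)))
                * rexp (-c * ‖y - s⁻¹ • ((a * σ ^ 2) • X + b • z)‖ ^ 2) := by
        intro y
        rw [smul_eq_mul, mul_assoc, hkey z y, ← mul_assoc]
      rw [funext e, integral_const_mul, aux_integral_gauss_shift c hc, hK_def]
      ring
    rw [funext inner_eq, integral_const_mul]
  -- Claim 2 : the numerator
  have hg2_int : Integrable (fun y : EuclideanSpace ℝ (Fin d) =>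
      (b⁻¹ * a) * (‖y - a⁻¹ • X‖ * rexp (-(a ^ 2 / (2 * b)) * ‖y - a⁻¹ • X‖ ^ 2))) :=
    (aux_integrable_norm_gauss (a ^ 2 / (2 * b)) (by positivity) (a⁻¹ • X)).const_mul _
  have hbound2 : ∀ y : EuclideanSpace ℝ (Fin d),
      ‖(b⁻¹ * rexp (-‖X - a • y‖ ^ 2 / (2 * b))) • (X - a • y)‖
        ≤ (b⁻¹ * a) * (‖y - a⁻¹ • X‖ * rexp (-(a ^ 2 / (2 * b)) * ‖y - a⁻¹ • X‖ ^ 2)) := by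
    intro y
    have e2 : rexp (-‖X - a • y‖ ^ 2 / (2 * b))
        = rexp (-(a ^ 2 / (2 * b)) * ‖y - a⁻¹ • X‖ ^ 2) :=
      congrArg rexp (by rw [aux_norm_affine a ha X y]; ring)
    rw [norm_smul, Real.norm_eq_abs, abs_of_pos (by positivity), e2,
      aux_norm_affine' a ha X y]
    apply le_of_eq
    ring
  have claim2 : (∫ y, (b⁻¹ * rexp (-‖X - a • y‖ ^ 2 / (2 * b))) • (X - a • y)
        ∂(volume.withDensity (fun y => ENNReal.ofReal
          (∫ z, C * rexp (-‖y - z‖ ^ 2 / (2 * σ ^ 2)) ∂ρ₀))))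
      = K • ∫ z, (s⁻¹ * rexp (-‖X - a • z‖ ^ 2 / (2 * s))) • (X - a • z) ∂ρ₀ := by
    rw [aux_fubini ρ₀ σ C hσ hC.le _ (by fun_prop) _ hg2_int hbound2]
    have inner_eq : ∀ z : EuclideanSpace ℝ (Fin d),
        (∫ y, (C * rexp (-‖y - z‖ ^ 2 / (2 * σ ^ 2)))
            • ((b⁻¹ * rexp (-‖X - a • y‖ ^ 2 / (2 * b))) • (X - a • y)))
          = K • ((s⁻¹ * rexp (-‖X - a • z‖ ^ 2 / (2 * s))) • (X - a • z)) := by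
      intro z
      have e : ∀ y : EuclideanSpace ℝ (Fin d),
          (C * rexp (-‖y - z‖ ^ 2 / (2 * σ ^ 2)))
              • ((b⁻¹ * rexp (-‖X - a • y‖ ^ 2 / (2 * b))) • (X - a • y))
            = (C * b⁻¹ * rexp (-‖X - a • z‖ ^ 2 / (2 * s)))
                • (rexp (-c * ‖y - s⁻¹ • ((a * σ ^ 2) • X + b • z)‖ ^ 2) • (X - a • y)) := by
        intro y
        rw [smul_smul, smul_smul]
        congr 1
        calc C * rexp (-‖y - z‖ ^ 2 / (2 * σ ^ 2)) * (b⁻¹ * rexp (-‖X - a • y‖ ^ 2 / (2 * b)))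
            = (C * b⁻¹) * (rexp (-‖y - z‖ ^ 2 / (2 * σ ^ 2))
                * rexp (-‖X - a • y‖ ^ 2 / (2 * b))) := by ring
          _ = _ := by rw [hkey z y]; ring
      rw [funext e, integral_smul, aux_integral_gauss_linear c hc a _ X,
        aux_mean_shift a b σ s hb hσ hs_eq X z]
      rw [smul_smul, smul_smul, smul_smul]
      congr 1
      rw [hK_def]
      field_simp
    rw [funext inner_eq, integral_smul]
  rw [claim1, claim2, smul_smul]
  congr 1
  rw [mul_inv, mul_comm K⁻¹, mul_assoc, inv_mul_cancel₀ hK.ne', mul_one]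
end
end

section
/- Let ρ₀ be a nonzero finite Borel measure on ℝ^d whose support is contained in the closed ball of radius R centered at the origin, let σ > 0, and let μ be the convolution of ρ₀ with the Gaussian measure N(0, σ² I_d). Then for every t > 0 and X ∈ ℝ^d, ‖S_μ(X,t)‖ ≤ (‖X‖ + R)/(σ² e^{−t} + 1 − e^{−t}) ≤ (‖X‖ + R)/min(σ², 1); in particular, for each fixed X, S_μ(X,t) remains bounded as t → 0⁺. -/
open MeasureTheory Real Filter Topology

noncomputable section

open scoped ENNReal NNReal

variable {d : ℕ}
local notation "E" => EuclideanSpace ℝ (Fin d)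

lemma gauss_int {c : ℝ} (hc : 0 < c) :
    ∫ u : E, rexp (-(c * ‖u‖ ^ 2)) = (π / c) ^ ((d : ℝ) / 2) := by
  have := GaussianFourier.integral_rexp_neg_mul_sq_norm (V := E) hc
  simpa [neg_mul, finrank_euclideanSpace_fin] using this

lemma gauss_integrable {c : ℝ} (hc : 0 < c) :
    Integrable (fun u : E => rexp (-(c * ‖u‖ ^ 2))) := by
  have h := (GaussianFourier.integrable_cexp_neg_mul_sq_norm_add
    (b := (c : ℂ)) (by simpa using hc) 0 (0 : E)).norm
  refine h.congr (Filter.Eventually.of_forall fun v => ?_)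
  have hre : ((-(c:ℂ) * (‖v‖:ℂ) ^ 2 + 0 * ((inner ℝ (0:E) v : ℝ) : ℂ)).re) = -(c*‖v‖^2) := by
    simp [← Complex.ofReal_pow]
  simp only [Complex.norm_exp, hre]

lemma gauss_smul_zero {c : ℝ} :
    ∫ u : E, rexp (-(c * ‖u‖ ^ 2)) • u = 0 := by
  have h1 : ∫ u : E, rexp (-(c * ‖-u‖ ^ 2)) • (-u) = ∫ u : E, rexp (-(c * ‖u‖ ^ 2)) • u :=
    integral_neg_eq_self (fun u : E => rexp (-(c * ‖u‖ ^ 2)) • u) volume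
  have h2 : ∫ u : E, rexp (-(c * ‖-u‖ ^ 2)) • (-u)
      = -∫ u : E, rexp (-(c * ‖u‖ ^ 2)) • u := by
    simp only [norm_neg, smul_neg]
    exact integral_neg _
  have heq : (∫ u : E, rexp (-(c * ‖u‖ ^ 2)) • u)
      = -∫ u : E, rexp (-(c * ‖u‖ ^ 2)) • u := h1.symm.trans h2
  have h3 : (2 : ℝ) • ∫ u : E, rexp (-(c * ‖u‖ ^ 2)) • u = 0 := by
    rw [two_smul]; exact add_eq_zero_iff_eq_neg.2 heq
  have := smul_eq_zero.1 h3
  simpa using this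

lemma r_exp_bound {c r : ℝ} (hc : 0 < c) (hr : 0 ≤ r) :
    r * rexp (-(c * r ^ 2)) ≤ (Real.sqrt c)⁻¹ := by
  have hsc : 0 < Real.sqrt c := Real.sqrt_pos.2 hc
  rcases le_or_gt r (Real.sqrt c)⁻¹ with h | h
  · calc r * rexp (-(c * r ^ 2)) ≤ r * 1 := by
          apply mul_le_mul_of_nonneg_left _ hr
          exact Real.exp_le_one_iff.2 (by nlinarith)
      _ ≤ (Real.sqrt c)⁻¹ := by simpa using h
  · have hr0 : 0 < r := lt_trans (by positivity) h
    have hexp : rexp (-(c * r ^ 2)) ≤ (c * r ^ 2)⁻¹ := by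
      rw [Real.exp_neg]
      apply inv_anti₀ (by positivity)
      nlinarith [Real.add_one_le_exp (c * r ^ 2)]
    calc r * rexp (-(c * r ^ 2)) ≤ r * (c * r ^ 2)⁻¹ := by
          apply mul_le_mul_of_nonneg_left hexp hr0.le
      _ = (c * r)⁻¹ := by field_simp
      _ ≤ (Real.sqrt c)⁻¹ := by
          apply inv_anti₀ hsc
          have : Real.sqrt c * Real.sqrt c = c := Real.mul_self_sqrt hc.le
          calc Real.sqrt c = c * (Real.sqrt c)⁻¹ := by field_simp [this]; exact Real.sq_sqrt hc.le
            _ ≤ c * r := by apply mul_le_mul_of_nonneg_left h.le hc.le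

lemma gauss_smul_integrable {c : ℝ} (hc : 0 < c) :
    Integrable (fun u : E => rexp (-(c * ‖u‖ ^ 2)) • u) := by
  have h2 : 0 < c / 2 := by positivity
  refine Integrable.mono' ((gauss_integrable h2).const_mul ((Real.sqrt (c/2))⁻¹))
    ?_ (Filter.Eventually.of_forall fun u => ?_)
  · apply Continuous.aestronglyMeasurable
    fun_prop
  · rw [norm_smul, Real.norm_eq_abs, abs_of_nonneg (Real.exp_pos _).le]
    have : rexp (-(c * ‖u‖ ^ 2)) = rexp (-(c/2 * ‖u‖ ^ 2)) * rexp (-(c/2 * ‖u‖ ^ 2)) := by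
      rw [← Real.exp_add]; ring_nf
    rw [this]
    calc rexp (-(c/2 * ‖u‖ ^ 2)) * rexp (-(c/2 * ‖u‖ ^ 2)) * ‖u‖
        = (‖u‖ * rexp (-(c/2 * ‖u‖ ^ 2))) * rexp (-(c/2 * ‖u‖ ^ 2)) := by ring
      _ ≤ (Real.sqrt (c/2))⁻¹ * rexp (-(c/2 * ‖u‖ ^ 2)) := by
          apply mul_le_mul_of_nonneg_right (r_exp_bound h2 (norm_nonneg u)) (Real.exp_pos _).le

lemma vec1 {a σ b s : ℝ} (hb : 0 < b) (hσ : 0 < σ) (hs : s = a^2*σ^2 + b)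
    (X z u : E) (m : E) (hm : m = s⁻¹ • ((a*σ^2) • X + b • z)) :
    X - a•(m+u) = (b/s) • (X - a•z) - a•u := by
  subst hs
  have hs0 : a^2*σ^2 + b ≠ 0 := by positivity
  rw [hm]
  match_scalars <;> (field_simp; try ring_nf; try tauto)

lemma vec2 {a σ b s : ℝ} (hb : 0 < b) (hσ : 0 < σ) (hs : s = a^2*σ^2 + b)
    (X z u : E) (m : E) (hm : m = s⁻¹ • ((a*σ^2) • X + b • z)) :
    m + u - z = ((a*σ^2)/s) • (X - a•z) + u := by
  subst hs
  have hs0 : a^2*σ^2 + b ≠ 0 := by positivity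
  rw [hm]
  match_scalars <;> (field_simp; try ring_nf; try tauto)

lemma sq_split {a σ b s : ℝ} (hb : 0 < b) (hσ : 0 < σ) (hs : s = a^2*σ^2 + b)
    (X z u m : E) (hm : m = s⁻¹ • ((a*σ^2) • X + b • z)) :
    (2*b)⁻¹ * ‖X - a•(m+u)‖^2 + (2*σ^2)⁻¹ * ‖m + u - z‖^2
      = (2*s)⁻¹ * ‖X - a•z‖^2 + (s/(2*b*σ^2)) * ‖u‖^2 := by
  have hs0 : 0 < s := by rw [hs]; positivity
  rw [vec1 hb hσ hs X z u m hm, vec2 hb hσ hs X z u m hm]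
  have e1 : ‖(b/s) • (X - a•z) - a•u‖^2
      = (b/s)^2*‖X - a•z‖^2 - 2*((b/s)*a)*(inner ℝ (X - a•z) u : ℝ) + a^2*‖u‖^2 := by
    rw [norm_sub_sq_real, real_inner_smul_left, real_inner_smul_right, norm_smul, norm_smul,
      mul_pow, mul_pow]
    simp only [Real.norm_eq_abs, sq_abs]
    ring
  have e2 : ‖((a*σ^2)/s) • (X - a•z) + u‖^2
      = ((a*σ^2)/s)^2*‖X - a•z‖^2 + 2*(((a*σ^2)/s))*(inner ℝ (X - a•z) u : ℝ) + ‖u‖^2 := by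
    rw [norm_add_sq_real, real_inner_smul_left, norm_smul, mul_pow]
    simp only [Real.norm_eq_abs, sq_abs]
    ring
  rw [e1, e2]
  subst hs
  field_simp
  ring

lemma msupport_compl_null {α : Type*} [TopologicalSpace α] [MeasurableSpace α]
    [SecondCountableTopology α] (ρ : Measure α) : ρ (msupport ρ)ᶜ = 0 := by
  apply measure_null_of_locally_null
  intro x hx
  simp only [msupport, Set.mem_compl_iff, Set.mem_setOf_eq, not_forall] at hx
  obtain ⟨U, hU, hxU, hU0⟩ := hx
  exact ⟨U, Filter.mem_inf_of_left (hU.mem_nhds hxU), by simpa using hU0⟩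

lemma comp_integrable {c aa : ℝ} (hc : 0 < c) (haa : aa ≠ 0) (X : E) :
    Integrable (fun y : E => rexp (-(c * ‖X - aa • y‖ ^ 2))) := by
  have h1 : Integrable (fun w : E => rexp (-(c * ‖w - X‖ ^ 2))) :=
    (gauss_integrable hc).comp_sub_right X
  have h2 : Integrable (fun w : E => rexp (-(c * ‖X - w‖ ^ 2))) := by
    refine h1.congr (Filter.Eventually.of_forall fun w => ?_)
    simp only []
    rw [norm_sub_rev]
  exact h2.comp_smul haa

lemma integral_swap_of_bound {V : Type*} [NormedAddCommGroup V] [NormedSpace ℝ V]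
    [CompleteSpace V]
    (ρ : Measure E) [IsFiniteMeasure ρ] (f : E → E → V)
    (hf : Continuous (Function.uncurry f))
    (G : E → ℝ) (hG : Integrable G volume)
    (hbound : ∀ y z, ‖f y z‖ ≤ G y) :
    ∫ y, ∫ z, f y z ∂ρ ∂(volume : Measure E) = ∫ z, ∫ y, f y z ∂(volume : Measure E) ∂ρ := by
  apply integral_integral_swap
  have hmeas : AEStronglyMeasurable (Function.uncurry f) ((volume : Measure E).prod ρ) :=
    hf.aestronglyMeasurable
  rw [integrable_prod_iff hmeas]
  constructor
  · refine Filter.Eventually.of_forall fun y => ?_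
    refine Integrable.mono' (integrable_const (G y)) ?_
      (Filter.Eventually.of_forall fun z => hbound y z)
    exact (hf.comp (Continuous.prodMk_right y)).aestronglyMeasurable
  · refine Integrable.mono' (hG.const_mul (ρ Set.univ).toReal)
      hmeas.norm.integral_prod_right' (Filter.Eventually.of_forall fun y => ?_)
    have h1 : ∫ z, ‖f y z‖ ∂ρ ≤ ∫ _z, G y ∂ρ := by
      apply integral_mono_of_nonneg (Filter.Eventually.of_forall fun z => norm_nonneg _)
        (integrable_const _) (Filter.Eventually.of_forall fun z => hbound y z)
    rw [Real.norm_eq_abs, abs_of_nonneg (integral_nonneg fun z => norm_nonneg _)]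
    calc ∫ z, ‖f y z‖ ∂ρ ≤ ∫ _z, G y ∂ρ := h1
      _ = (ρ Set.univ).toReal • G y := by rw [integral_const]; rfl
      _ = (ρ Set.univ).toReal * G y := rfl

lemma inner_scalar {a σ b s : ℝ} (hb : 0 < b) (hσ : 0 < σ) (hs : s = a^2*σ^2 + b)
    (X z : E) :
    ∫ y : E, rexp (-((2*b)⁻¹ * ‖X - a•y‖^2)) * rexp (-((2*σ^2)⁻¹ * ‖y - z‖^2))
      = (π/(s/(2*b*σ^2)))^((d:ℝ)/2) * rexp (-((2*s)⁻¹ * ‖X - a•z‖^2)) := by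
  have hs0 : 0 < s := by rw [hs]; positivity
  have hc4 : 0 < s/(2*b*σ^2) := by positivity
  set m : E := s⁻¹ • ((a*σ^2) • X + b • z) with hm
  rw [← integral_add_left_eq_self
    (fun y : E => rexp (-((2*b)⁻¹ * ‖X - a•y‖^2)) * rexp (-((2*σ^2)⁻¹ * ‖y - z‖^2))) m]
  have hpt : ∀ u : E, rexp (-((2*b)⁻¹ * ‖X - a•(m+u)‖^2)) * rexp (-((2*σ^2)⁻¹ * ‖m+u - z‖^2))
      = rexp (-((2*s)⁻¹ * ‖X - a•z‖^2)) * rexp (-((s/(2*b*σ^2)) * ‖u‖^2)) := by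
    intro u
    rw [← Real.exp_add, ← Real.exp_add, ← neg_add, ← neg_add,
      sq_split hb hσ hs X z u m hm]
  simp only [hpt]
  rw [integral_const_mul, gauss_int hc4]
  ring

lemma inner_vector {a σ b s : ℝ} (hb : 0 < b) (hσ : 0 < σ) (hs : s = a^2*σ^2 + b)
    (X z : E) :
    ∫ y : E, (b⁻¹ * (rexp (-((2*b)⁻¹ * ‖X - a•y‖^2)) * rexp (-((2*σ^2)⁻¹ * ‖y - z‖^2))))
        • (X - a•y)
      = ((π/(s/(2*b*σ^2)))^((d:ℝ)/2) * rexp (-((2*s)⁻¹ * ‖X - a•z‖^2)) / s) • (X - a•z) := by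
  have hs0 : 0 < s := by rw [hs]; positivity
  have hc4 : 0 < s/(2*b*σ^2) := by positivity
  set c4 := s/(2*b*σ^2) with hc4def
  set m : E := s⁻¹ • ((a*σ^2) • X + b • z) with hm
  set ez := rexp (-((2*s)⁻¹ * ‖X - a•z‖^2)) with hez
  rw [← integral_add_left_eq_self
    (fun y : E => (b⁻¹ * (rexp (-((2*b)⁻¹ * ‖X - a•y‖^2)) * rexp (-((2*σ^2)⁻¹ * ‖y - z‖^2))))
        • (X - a•y)) m]
  have hpt : ∀ u : E,
      (b⁻¹ * (rexp (-((2*b)⁻¹ * ‖X - a•(m+u)‖^2)) * rexp (-((2*σ^2)⁻¹ * ‖m+u - z‖^2))))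
        • (X - a•(m+u))
      = ((b⁻¹ * ez * (b/s)) * rexp (-(c4 * ‖u‖^2))) • (X - a•z)
        - (b⁻¹ * ez * a) • (rexp (-(c4 * ‖u‖^2)) • u) := by
    intro u
    have h1 : rexp (-((2*b)⁻¹ * ‖X - a•(m+u)‖^2)) * rexp (-((2*σ^2)⁻¹ * ‖m+u - z‖^2))
        = ez * rexp (-(c4 * ‖u‖^2)) := by
      rw [← Real.exp_add, ← neg_add, sq_split hb hσ hs X z u m hm, neg_add, Real.exp_add]
    rw [h1, vec1 hb hσ hs X z u m hm]
    module
  simp only [hpt]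
  have int1 : Integrable (fun u : E =>
      (b⁻¹ * ez * (b/s) * rexp (-(c4 * ‖u‖^2))) • (X - a•z)) :=
    ((gauss_integrable hc4).const_mul _).smul_const _
  have int2 : Integrable (fun u : E =>
      (b⁻¹ * ez * a) • (rexp (-(c4 * ‖u‖^2)) • u)) := by
    exact (gauss_smul_integrable hc4).smul (b⁻¹ * ez * a)
  rw [integral_sub int1 int2]
  rw [integral_smul, gauss_smul_zero, smul_zero, sub_zero]
  simp only [mul_assoc]
  rw [integral_smul_const, integral_const_mul, integral_const_mul, integral_const_mul,
    gauss_int hc4]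
  congr 1
  field_simp

set_option maxHeartbeats 1000000 in
lemma score_bound_core (ρ₀ : Measure E) [IsFiniteMeasure ρ₀] (hρ₀ : ρ₀ ≠ 0)
    (R : ℝ) (hsupp : msupport ρ₀ ⊆ Metric.closedBall 0 R)
    (σ : ℝ) (hσ : 0 < σ) (μ : Measure E)
    (hμ : μ = volume.withDensity (fun y => ENNReal.ofReal
      (∫ z, ((2 * π * σ ^ 2) ^ (-(d : ℝ) / 2)) *
        Real.exp (-‖y - z‖ ^ 2 / (2 * σ ^ 2)) ∂ρ₀)))
    (t : ℝ) (ht : 0 < t) (X : E) :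
    ‖score μ X t‖ ≤ (‖X‖ + R) / (σ ^ 2 * Real.exp (-t) + 1 - Real.exp (-t)) := by
  rw [score]
  set a : ℝ := Real.exp (-t / 2) with ha_def
  set b : ℝ := 1 - Real.exp (-t) with hb_def
  have het : Real.exp (-t) < 1 := by
    rw [Real.exp_lt_one_iff]; linarith
  have ha : 0 < a := Real.exp_pos _
  have ha1 : a ≤ 1 := by
    rw [ha_def]; exact Real.exp_le_one_iff.2 (by linarith)
  have hb : 0 < b := by rw [hb_def]; linarith
  have haa : a^2 = Real.exp (-t) := by
    rw [ha_def, sq, ← Real.exp_add]; norm_num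
  set s : ℝ := σ ^ 2 * Real.exp (-t) + 1 - Real.exp (-t) with hs_def
  have hs : s = a^2*σ^2 + b := by rw [hs_def, haa, hb_def]; ring
  have hs0 : 0 < s := by rw [hs]; positivity
  set c0 : ℝ := (2 * π * σ ^ 2) ^ (-(d : ℝ) / 2) with hc0_def
  have hc0 : 0 < c0 := Real.rpow_pos_of_pos (by positivity) _
  set K : ℝ := (π/(s/(2*b*σ^2)))^((d:ℝ)/2) with hK_def
  have hK : 0 < K := Real.rpow_pos_of_pos (by positivity) _
  set ee : E → ℝ := fun z => rexp (-((2*s)⁻¹ * ‖X - a•z‖^2)) with hee_def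
  set g : E → ℝ := fun y => rexp (-((2*b)⁻¹ * ‖X - a•y‖^2)) with hg_def
  have hgk : ∀ y : E, gkernel X y t = g y := by
    intro y
    rw [gkernel, hg_def]
    congr 1
    rw [neg_div, div_eq_inv_mul]
  set q : E → ℝ := fun y => ∫ z, c0 * rexp (-((2*σ^2)⁻¹ * ‖y - z‖^2)) ∂ρ₀ with hq_def
  have hqnn : ∀ y, 0 ≤ q y := fun y => integral_nonneg (fun z => by positivity)
  have hμ' : μ = volume.withDensity (fun y => ENNReal.ofReal (q y)) := by
    rw [hμ]
    congr 1
    funext y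
    congr 1
    apply integral_congr_ae
    filter_upwards with z
    congr 1
    rw [neg_div, div_eq_inv_mul]
  have hFcont : Continuous (Function.uncurry
      (fun y z : E => c0 * rexp (-((2*σ^2)⁻¹ * ‖y - z‖^2)))) := by
    apply Continuous.mul continuous_const
    apply Real.continuous_exp.comp
    fun_prop
  have hq_meas : Measurable q := by
    have : StronglyMeasurable (fun p : E × E => c0 * rexp (-((2*σ^2)⁻¹ * ‖p.1 - p.2‖^2))) :=
      hFcont.stronglyMeasurable
    exact this.integral_prod_right'.measurable
  -- generic withDensity rewriting
  have hInt_wd : ∀ {V : Type} [NormedAddCommGroup V] [NormedSpace ℝ V] [CompleteSpace V],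
      ∀ (h : E → V), (∫ y, h y ∂μ) = ∫ y, q y • h y := by
    intro V _ _ _ h
    rw [hμ']
    have hco : (fun y => ENNReal.ofReal (q y)) = fun y => ((q y).toNNReal : ℝ≥0∞) := rfl
    have hqm : Measurable fun y => (q y).toNNReal := measurable_real_toNNReal.comp hq_meas
    rw [hco, integral_withDensity_eq_integral_smul hqm h]
    apply integral_congr_ae
    filter_upwards with y
    rw [NNReal.smul_def, Real.coe_toNNReal _ (hqnn y)]
  have hgz : ∀ y, 0 < g y := fun y => Real.exp_pos _
  have heez : ∀ z, 0 < ee z := fun z => Real.exp_pos _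
  have hb2 : (0:ℝ) < (2*b)⁻¹ := by positivity
  have hb4 : (0:ℝ) < (4*b)⁻¹ := by positivity
  have hE1 : ∀ y z : E, rexp (-((2*σ^2)⁻¹ * ‖y - z‖^2)) ≤ 1 := by
    intro y z
    apply Real.exp_le_one_iff.2
    have : (0:ℝ) ≤ (2*σ^2)⁻¹ * ‖y - z‖^2 := by positivity
    linarith
  -- Step A : the value of pfun
  have hP : pfun μ X t = c0 * (K * ∫ z, ee z ∂ρ₀) := by
    rw [pfun]
    simp only [hgk]
    rw [hInt_wd (fun y => g y)]
    have e1 : ∀ y, q y • g y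
        = ∫ z, (c0 * rexp (-((2*σ^2)⁻¹ * ‖y - z‖^2))) * g y ∂ρ₀ := by
      intro y
      rw [smul_eq_mul, hq_def]
      exact (integral_mul_const _ _).symm
    simp only [e1]
    have hcont : Continuous (Function.uncurry
        (fun y z : E => (c0 * rexp (-((2*σ^2)⁻¹ * ‖y - z‖^2))) * g y)) := by
      simp only [hg_def, Function.uncurry]
      fun_prop
    have hG : Integrable (fun y : E => c0 * g y) := by
      simp only [hg_def]
      exact (comp_integrable hb2 ha.ne' X).const_mul c0
    have hbd : ∀ y z : E, ‖(c0 * rexp (-((2*σ^2)⁻¹ * ‖y - z‖^2))) * g y‖ ≤ c0 * g y := by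
      intro y z
      rw [Real.norm_eq_abs, abs_of_nonneg (mul_nonneg (by positivity) (hgz y).le)]
      have h1 := hE1 y z
      have h2 := (hgz y).le
      calc c0 * rexp (-((2*σ^2)⁻¹ * ‖y - z‖^2)) * g y
          ≤ c0 * 1 * g y :=
            mul_le_mul_of_nonneg_right (mul_le_mul_of_nonneg_left h1 hc0.le) h2
        _ = c0 * g y := by ring
    rw [integral_swap_of_bound ρ₀ _ hcont (fun y => c0 * g y) hG hbd]
    have hz : ∀ z : E, (∫ y, (c0 * rexp (-((2*σ^2)⁻¹ * ‖y - z‖^2))) * g y ∂(volume : Measure E))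
        = c0 * (K * ee z) := by
      intro z
      have e2 : (fun y : E => (c0 * rexp (-((2*σ^2)⁻¹ * ‖y - z‖^2))) * g y)
          = fun y : E => c0 * (g y * rexp (-((2*σ^2)⁻¹ * ‖y - z‖^2))) := by
        funext y; ring
      rw [e2, integral_const_mul]
      congr 1
      simp only [hg_def, hK_def, hee_def]
      exact inner_scalar hb hσ hs X z
    simp only [hz]
    rw [integral_const_mul, integral_const_mul]
  -- Step B : the value of the numerator
  have hN : (∫ y, (b⁻¹ * gkernel X y t) • (X - a • y) ∂μ)
      = ∫ z, (c0 * (K * ee z / s)) • (X - a•z) ∂ρ₀ := by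
    simp only [hgk]
    rw [hInt_wd (fun y => (b⁻¹ * g y) • (X - a • y))]
    have e1 : ∀ y, q y • ((b⁻¹ * g y) • (X - a • y))
        = ∫ z, (c0 * rexp (-((2*σ^2)⁻¹ * ‖y - z‖^2))) • ((b⁻¹ * g y) • (X - a • y)) ∂ρ₀ := by
      intro y
      rw [hq_def]
      exact (integral_smul_const _ _).symm
    simp only [e1]
    have hcont : Continuous (Function.uncurry
        (fun y z : E => (c0 * rexp (-((2*σ^2)⁻¹ * ‖y - z‖^2)))
          • ((b⁻¹ * g y) • (X - a • y)))) := by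
      simp only [hg_def, Function.uncurry]
      fun_prop
    have hG : Integrable (fun y : E =>
        (c0 * b⁻¹ * (Real.sqrt ((4*b)⁻¹))⁻¹) * rexp (-((4*b)⁻¹ * ‖X - a•y‖^2))) :=
      (comp_integrable hb4 ha.ne' X).const_mul _
    have hbd : ∀ y z : E, ‖(c0 * rexp (-((2*σ^2)⁻¹ * ‖y - z‖^2)))
          • ((b⁻¹ * g y) • (X - a • y))‖
        ≤ (c0 * b⁻¹ * (Real.sqrt ((4*b)⁻¹))⁻¹) * rexp (-((4*b)⁻¹ * ‖X - a•y‖^2)) := by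
      intro y z
      rw [norm_smul, norm_smul, Real.norm_eq_abs, Real.norm_eq_abs,
        abs_of_nonneg (by positivity), abs_of_nonneg (mul_nonneg (by positivity) (hgz y).le)]
      have hsplit : g y = rexp (-((4*b)⁻¹ * ‖X - a•y‖^2)) * rexp (-((4*b)⁻¹ * ‖X - a•y‖^2)) := by
        rw [hg_def]
        simp only []
        rw [← Real.exp_add]
        congr 1
        have : (2*b)⁻¹ = (4*b)⁻¹ + (4*b)⁻¹ := by
          field_simp
          ring
        rw [this]; ring
      have hkey : ‖X - a•y‖ * rexp (-((4*b)⁻¹ * ‖X - a•y‖^2)) ≤ (Real.sqrt ((4*b)⁻¹))⁻¹ :=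
        r_exp_bound hb4 (norm_nonneg _)
      have hE := hE1 y z
      have hQ : 0 ≤ rexp (-((4*b)⁻¹ * ‖X - a•y‖^2)) := (Real.exp_pos _).le
      have hEpos : 0 ≤ rexp (-((2*σ^2)⁻¹ * ‖y - z‖^2)) := (Real.exp_pos _).le
      have hb' : 0 ≤ b⁻¹ := by positivity
      calc c0 * rexp (-((2*σ^2)⁻¹ * ‖y - z‖^2)) * (b⁻¹ * g y * ‖X - a•y‖)
          ≤ c0 * 1 * (b⁻¹ * g y * ‖X - a•y‖) := by
            apply mul_le_mul_of_nonneg_right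
            · exact mul_le_mul_of_nonneg_left hE hc0.le
            · exact mul_nonneg (mul_nonneg (by positivity) (hgz y).le) (norm_nonneg _)
        _ = (c0 * b⁻¹) * ((‖X - a•y‖ * rexp (-((4*b)⁻¹ * ‖X - a•y‖^2)))
              * rexp (-((4*b)⁻¹ * ‖X - a•y‖^2))) := by
            rw [hsplit]; ring
        _ ≤ (c0 * b⁻¹) * ((Real.sqrt ((4*b)⁻¹))⁻¹ * rexp (-((4*b)⁻¹ * ‖X - a•y‖^2))) := by
            apply mul_le_mul_of_nonneg_left _ (by positivity)
            exact mul_le_mul_of_nonneg_right hkey hQ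
        _ = (c0 * b⁻¹ * (Real.sqrt ((4*b)⁻¹))⁻¹) * rexp (-((4*b)⁻¹ * ‖X - a•y‖^2)) := by ring
    rw [integral_swap_of_bound ρ₀ _ hcont _ hG hbd]
    have hz : ∀ z : E, (∫ y, (c0 * rexp (-((2*σ^2)⁻¹ * ‖y - z‖^2)))
          • ((b⁻¹ * g y) • (X - a • y)) ∂(volume : Measure E))
        = (c0 * (K * ee z / s)) • (X - a•z) := by
      intro z
      have e2 : (fun y : E => (c0 * rexp (-((2*σ^2)⁻¹ * ‖y - z‖^2)))
            • ((b⁻¹ * g y) • (X - a • y)))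
          = fun y : E => c0 • ((b⁻¹ * (g y * rexp (-((2*σ^2)⁻¹ * ‖y - z‖^2)))) • (X - a • y)) := by
        funext y
        rw [smul_smul, smul_smul]
        congr 1
        ring
      rw [e2, integral_smul]
      have e3 : (∫ y, (b⁻¹ * (g y * rexp (-((2*σ^2)⁻¹ * ‖y - z‖^2)))) • (X - a • y)
            ∂(volume : Measure E))
          = (K * ee z / s) • (X - a•z) := by
        simp only [hg_def, hK_def, hee_def]
        exact inner_vector hb hσ hs X z
      rw [e3, smul_smul]
    simp only [hz]
  -- positivity of pfun
  have hee_int : Integrable ee ρ₀ := by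
    refine Integrable.mono' (integrable_const 1) ?_ (Filter.Eventually.of_forall fun z => ?_)
    · apply Continuous.aestronglyMeasurable
      simp only [hee_def]
      fun_prop
    · rw [Real.norm_eq_abs, abs_of_nonneg (heez z).le]
      apply Real.exp_le_one_iff.2
      have : (0:ℝ) ≤ (2*s)⁻¹ * ‖X - a•z‖^2 := by positivity
      linarith
  have hIe_pos : 0 < ∫ z, ee z ∂ρ₀ := by
    rw [integral_pos_iff_support_of_nonneg (fun z => (heez z).le) hee_int]
    have hsup : Function.support ee = Set.univ :=
      Set.eq_univ_of_forall (fun z => (heez z).ne')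
    rw [hsup]
    exact Measure.measure_univ_pos.2 hρ₀
  -- a.e. bound on the support
  have hae : ∀ᵐ z ∂ρ₀, ‖z‖ ≤ R := by
    have h0 := msupport_compl_null ρ₀
    rw [ae_iff]
    refine measure_mono_null ?_ h0
    intro z hz
    simp only [Set.mem_setOf_eq, not_le] at hz
    intro hm
    have := hsupp hm
    rw [Metric.mem_closedBall, dist_zero_right] at this
    linarith
  -- norm bound of the numerator
  set Ie : ℝ := ∫ z, ee z ∂ρ₀ with hIe_def
  have hXR : ∀ᵐ z ∂ρ₀, ‖X - a•z‖ ≤ ‖X‖ + R := by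
    filter_upwards [hae] with z hz
    calc ‖X - a•z‖ ≤ ‖X‖ + ‖a•z‖ := norm_sub_le _ _
      _ = ‖X‖ + a * ‖z‖ := by rw [norm_smul, Real.norm_eq_abs, abs_of_pos ha]
      _ ≤ ‖X‖ + R := by nlinarith [norm_nonneg z]
  have hRnn : 0 ≤ ‖X‖ + R := by
    by_contra hcon
    push_neg at hcon
    have hRneg : R < 0 := by nlinarith [norm_nonneg X]
    have hempty : Metric.closedBall (0:E) R = ∅ := Metric.closedBall_eq_empty.2 hRneg
    have : msupport ρ₀ = ∅ := Set.eq_empty_of_subset_empty (hempty ▸ hsupp)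
    have h0 := msupport_compl_null ρ₀
    rw [this, Set.compl_empty] at h0
    exact hρ₀ (Measure.measure_univ_eq_zero.1 h0)
  have hint_right : Integrable (fun z => (c0*(K/s)) * ((‖X‖+R) * ee z)) ρ₀ :=
    ((hee_int.const_mul _).const_mul _)
  have hptbd : ∀ᵐ z ∂ρ₀, ‖(c0 * (K * ee z / s)) • (X - a•z)‖
      ≤ (c0*(K/s)) * ((‖X‖+R) * ee z) := by
    filter_upwards [hXR] with z hz
    rw [norm_smul, Real.norm_eq_abs, abs_of_nonneg
      (mul_nonneg hc0.le (div_nonneg (mul_nonneg hK.le (heez z).le) hs0.le))]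
    have h2 : c0 * (K * ee z / s) * ‖X - a•z‖ = (c0*(K/s)*ee z) * ‖X - a•z‖ := by ring
    rw [h2]
    calc (c0*(K/s)*ee z) * ‖X - a•z‖ ≤ (c0*(K/s)*ee z) * (‖X‖+R) := by
          exact mul_le_mul_of_nonneg_left hz
            (mul_nonneg (mul_nonneg hc0.le (div_nonneg hK.le hs0.le)) (heez z).le)
      _ = (c0*(K/s)) * ((‖X‖+R) * ee z) := by ring
  have hint_left : Integrable (fun z => ‖(c0 * (K * ee z / s)) • (X - a•z)‖) ρ₀ := by
    refine Integrable.mono' hint_right ?_ ?_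
    · apply Continuous.aestronglyMeasurable
      apply Continuous.norm
      simp only [hee_def]
      fun_prop
    · filter_upwards [hptbd] with z hz
      rwa [norm_norm]
  have hNbound : ‖∫ z, (c0 * (K * ee z / s)) • (X - a•z) ∂ρ₀‖
      ≤ (c0*(K/s)) * ((‖X‖+R) * Ie) := by
    calc ‖∫ z, (c0 * (K * ee z / s)) • (X - a•z) ∂ρ₀‖
        ≤ ∫ z, ‖(c0 * (K * ee z / s)) • (X - a•z)‖ ∂ρ₀ := norm_integral_le_integral_norm _
      _ ≤ ∫ z, (c0*(K/s)) * ((‖X‖+R) * ee z) ∂ρ₀ :=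
          integral_mono_ae hint_left hint_right hptbd
      _ = (c0*(K/s)) * ((‖X‖+R) * Ie) := by
          rw [integral_const_mul, integral_const_mul]
  -- conclusion
  rw [hP, hN]
  have hPpos : 0 < c0 * (K * Ie) := mul_pos hc0 (mul_pos hK hIe_pos)
  rw [norm_smul, Real.norm_eq_abs, abs_of_pos (inv_pos.2 hPpos)]
  calc (c0 * (K * Ie))⁻¹ * ‖∫ z, (c0 * (K * ee z / s)) • (X - a•z) ∂ρ₀‖
      ≤ (c0 * (K * Ie))⁻¹ * ((c0*(K/s)) * ((‖X‖+R) * Ie)) := by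
        exact mul_le_mul_of_nonneg_left hNbound (inv_pos.2 hPpos).le
    _ = (‖X‖ + R) / s := by
        field_simp

/-- **Regularity of the score function.** For `μ = ρ₀ * N(0, σ² I_d)` with `ρ₀`
supported in the closed ball of radius `R`, the score stays bounded as `t → 0⁺`. -/
theorem score_bounded_gaussian_convolution {d : ℕ}
    (ρ₀ : Measure (EuclideanSpace ℝ (Fin d))) [IsFiniteMeasure ρ₀] (hρ₀ : ρ₀ ≠ 0)
    (R : ℝ) (hsupp : msupport ρ₀ ⊆ Metric.closedBall 0 R)
    (σ : ℝ) (hσ : 0 < σ)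
    (μ : Measure (EuclideanSpace ℝ (Fin d)))
    (hμ : μ = volume.withDensity (fun y => ENNReal.ofReal
      (∫ z, ((2 * π * σ ^ 2) ^ (-(d : ℝ) / 2)) *
        Real.exp (-‖y - z‖ ^ 2 / (2 * σ ^ 2)) ∂ρ₀))) :
    (∀ t : ℝ, 0 < t → ∀ X : EuclideanSpace ℝ (Fin d),
      ‖score μ X t‖ ≤ (‖X‖ + R) / (σ ^ 2 * Real.exp (-t) + 1 - Real.exp (-t)) ∧
      (‖X‖ + R) / (σ ^ 2 * Real.exp (-t) + 1 - Real.exp (-t)) ≤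
        (‖X‖ + R) / min (σ ^ 2) 1) ∧
    ∀ X : EuclideanSpace ℝ (Fin d), ∃ C : ℝ, ∀ t : ℝ, 0 < t → ‖score μ X t‖ ≤ C := by
  have hmain : ∀ t : ℝ, 0 < t → ∀ X : EuclideanSpace ℝ (Fin d),
      ‖score μ X t‖ ≤ (‖X‖ + R) / (σ ^ 2 * Real.exp (-t) + 1 - Real.exp (-t)) :=
    fun t ht X => score_bound_core ρ₀ hρ₀ R hsupp σ hσ μ hμ t ht X
  have hRnn : 0 ≤ R := by
    by_contra h
    push_neg at h
    have hempty : Metric.closedBall (0 : EuclideanSpace ℝ (Fin d)) R = ∅ :=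
      Metric.closedBall_eq_empty.2 h
    have hms : msupport ρ₀ = ∅ := Set.eq_empty_of_subset_empty (hempty ▸ hsupp)
    have h0 := msupport_compl_null ρ₀
    rw [hms, Set.compl_empty] at h0
    exact hρ₀ (Measure.measure_univ_eq_zero.1 h0)
  have hminpos : 0 < min (σ ^ 2) 1 := lt_min (by positivity) one_pos
  have hsecond : ∀ t : ℝ, 0 < t → ∀ X : EuclideanSpace ℝ (Fin d),
      (‖X‖ + R) / (σ ^ 2 * Real.exp (-t) + 1 - Real.exp (-t)) ≤ (‖X‖ + R) / min (σ ^ 2) 1 := by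
    intro t ht X
    have he1 : Real.exp (-t) < 1 := by rw [Real.exp_lt_one_iff]; linarith
    have he0 : 0 < Real.exp (-t) := Real.exp_pos _
    have hle : min (σ ^ 2) 1 ≤ σ ^ 2 * Real.exp (-t) + 1 - Real.exp (-t) := by
      have h1 := min_le_left (σ ^ 2) 1
      have h2 := min_le_right (σ ^ 2) 1
      nlinarith
    have hspos : 0 < σ ^ 2 * Real.exp (-t) + 1 - Real.exp (-t) := lt_of_lt_of_le hminpos hle
    rw [div_le_div_iff₀ hspos hminpos]
    exact mul_le_mul_of_nonneg_left hle (add_nonneg (norm_nonneg X) hRnn)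
  exact ⟨fun t ht X => ⟨hmain t ht X, hsecond t ht X⟩,
    fun X => ⟨(‖X‖ + R) / min (σ ^ 2) 1,
      fun t ht => (hmain t ht X).trans (hsecond t ht X)⟩⟩
end
end

section
/- Let a ≥ 0, m > 0, ε > 0 and t₀ > 0 be real numbers satisfying ε/2 > 2(e^{t₀/2} − 1)a, and set ε' = ε/2 − 2(e^{t₀/2} − 1)a. For t ∈ (0, t₀) define C_{t,ε} = e^{−t/2}(m + ε) − (1 − e^{−t/2})a and D_{t,ε'} = e^{−t/2}(m + ε') + (1 − e^{−t/2})a. Then for all 0 < t < t₀, C_{t,ε}² − D_{t,ε'}² ≥ e^{−t₀} ε m > 0. -/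
/-!
With `s = e^{-t/2}` one has `s e^{t₀/2} ≥ 1`, so the drift term `(1 - s) a` is at most
`s (e^{t₀/2} - 1) a`. Hence `C - D ≥ s ε / 2` and `C + D ≥ 2 s m`, and multiplying gives
`C² - D² ≥ s² ε m = e^{-t} ε m ≥ e^{-t₀} ε m`.
-/

open Real

lemma one_sub_exp_neg_half_le {t t₀ : ℝ} (h : t ≤ t₀) :
    1 - exp (-t / 2) ≤ exp (-t / 2) * (exp (t₀ / 2) - 1) := by
  have hprod : exp (-t / 2) * exp (t₀ / 2) = exp ((t₀ - t) / 2) := by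
    rw [← exp_add]; ring_nf
  have hone : 1 ≤ exp ((t₀ - t) / 2) := one_le_exp (by linarith)
  linarith [mul_sub (exp (-t / 2)) (exp (t₀ / 2)) 1]

lemma sq_sub_sq_ge_of_one_sub_le {s a m ε K : ℝ} (hs : 0 ≤ s) (ha : 0 ≤ a) (hm : 0 ≤ m)
    (hε : 0 ≤ ε) (hK : 1 - s ≤ s * K) (hε' : 2 * K * a ≤ ε / 2) :
    s ^ 2 * ε * m ≤
      (s * (m + ε) - (1 - s) * a) ^ 2 - (s * (m + (ε / 2 - 2 * K * a)) + (1 - s) * a) ^ 2 := by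
  have hdrift : (1 - s) * a ≤ s * K * a := mul_le_mul_of_nonneg_right hK ha
  have hdiff : s * (ε / 2) ≤
      (s * (m + ε) - (1 - s) * a) - (s * (m + (ε / 2 - 2 * K * a)) + (1 - s) * a) := by
    linarith
  have hsum : s * (2 * m) ≤
      (s * (m + ε) - (1 - s) * a) + (s * (m + (ε / 2 - 2 * K * a)) + (1 - s) * a) := by
    nlinarith [mul_nonneg hs (by linarith : 0 ≤ 3 * ε / 2 - 2 * K * a)]
  rw [sq_sub_sq]
  calc s ^ 2 * ε * m = s * (2 * m) * (s * (ε / 2)) := by ring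
    _ ≤ _ := mul_le_mul hsum hdiff (by positivity) (by linarith [mul_nonneg hs hm])

theorem gap_estimate_general (a m ε t₀ : ℝ) (ha : 0 ≤ a) (hm : 0 < m) (hε : 0 < ε)
    (hsmall : ε / 2 > 2 * (Real.exp (t₀ / 2) - 1) * a) :
    ∀ t : ℝ, 0 < t → t < t₀ →
      (Real.exp (-t / 2) * (m + ε) - (1 - Real.exp (-t / 2)) * a) ^ 2 -
          (Real.exp (-t / 2) * (m + (ε / 2 - 2 * (Real.exp (t₀ / 2) - 1) * a)) +
            (1 - Real.exp (-t / 2)) * a) ^ 2 ≥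
        Real.exp (-t₀) * ε * m ∧
      0 < Real.exp (-t₀) * ε * m := by
  intro t _ htt
  refine ⟨?_, by positivity⟩
  have hdecay : exp (-t₀) ≤ exp (-t / 2) ^ 2 := by
    rw [sq, ← exp_add]; exact exp_le_exp.mpr (by linarith)
  calc exp (-t₀) * ε * m ≤ exp (-t / 2) ^ 2 * ε * m := by gcongr
    _ ≤ _ := sq_sub_sq_ge_of_one_sub_le (exp_pos _).le ha hm.le hε.le
        (one_sub_exp_neg_half_le htt.le) hsmall.le

/-- The elementary gap estimate `C_{t,ε}² - D_{t,ε'}² ≥ e^{-t₀} ε m > 0` used in the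
proof of the singularity of the score function. -/
theorem gap_estimate (a m ε t₀ : ℝ) (ha : 0 ≤ a) (hm : 0 < m) (hε : 0 < ε)
    (ht₀ : 0 < t₀) (hsmall : ε / 2 > 2 * (Real.exp (t₀ / 2) - 1) * a) :
    ∀ t : ℝ, 0 < t → t < t₀ →
      (Real.exp (-t / 2) * (m + ε) - (1 - Real.exp (-t / 2)) * a) ^ 2 -
          (Real.exp (-t / 2) * (m + (ε / 2 - 2 * (Real.exp (t₀ / 2) - 1) * a)) +
            (1 - Real.exp (-t / 2)) * a) ^ 2 ≥
        Real.exp (-t₀) * ε * m ∧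
      0 < Real.exp (-t₀) * ε * m :=
  gap_estimate_general a m ε t₀ ha hm hε hsmall
end

section
/- Let K ≥ 2 be an integer and 0 < t₁ < T. For every strictly increasing finite sequence t₁ < t₂ < ⋯ < t_K with t_K = T, one has max_{2 ≤ k ≤ K} (t_k − t_{k−1})/t_k ≥ 1 − (t₁/T)^{1/(K−1)}, and equality holds for the geometric (exponential) schedule t_k = t₁ (T/t₁)^{(k−1)/(K−1)}. -/
open Real

/-- Among all increasing schedules `t₁ < t₂ < ⋯ < t_K = T`, the largest relative step
`(t_k - t_{k-1})/t_k` is at least `1 - (t₁/T)^{1/(K-1)}`, with equality (in each step)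
for the geometric schedule `t_k = t₁ (T/t₁)^{(k-1)/(K-1)}`. -/
theorem exponential_schedule_optimal (K : ℕ) (hK : 2 ≤ K) (t₁ T : ℝ)
    (ht₁ : 0 < t₁) (hT : t₁ < T) :
    (∀ t : ℕ → ℝ, (∀ k, 1 ≤ k → k < K → t k < t (k + 1)) → t 1 = t₁ → t K = T →
      ∃ k, 2 ≤ k ∧ k ≤ K ∧
        1 - (t₁ / T) ^ ((1 : ℝ) / ((K : ℝ) - 1)) ≤ (t k - t (k - 1)) / t k) ∧
    ∀ k, 2 ≤ k → k ≤ K →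
      (t₁ * (T / t₁) ^ (((k : ℝ) - 1) / ((K : ℝ) - 1)) -
          t₁ * (T / t₁) ^ (((k : ℝ) - 2) / ((K : ℝ) - 1))) /
        (t₁ * (T / t₁) ^ (((k : ℝ) - 1) / ((K : ℝ) - 1))) =
      1 - (t₁ / T) ^ ((1 : ℝ) / ((K : ℝ) - 1)) := by
  have hT0 : 0 < T := ht₁.trans hT
  set q : ℝ := (t₁ / T) ^ ((1 : ℝ) / ((K : ℝ) - 1)) with hqdef
  have hK2 : (2 : ℝ) ≤ (K : ℝ) := by exact_mod_cast hK
  have hKne : (K : ℝ) - 1 ≠ 0 := by linarith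
  have hbase : 0 < t₁ / T := div_pos ht₁ hT0
  have hq0 : 0 < q := rpow_pos_of_pos hbase _
  -- q ^ (K - 1) = t₁ / T
  have hqpow : q ^ (K - 1) = t₁ / T := by
    rw [hqdef, ← rpow_natCast _ (K - 1), ← rpow_mul hbase.le]
    have hcast : ((K - 1 : ℕ) : ℝ) = (K : ℝ) - 1 := by
      have : 1 ≤ K := by omega
      push_cast [this]; ring
    rw [hcast, one_div, inv_mul_cancel₀ hKne, rpow_one]
  constructor
  · intro t hmono h1 hKT
    by_contra h
    push_neg at h
    have hpos : ∀ k, 1 ≤ k → k ≤ K → 0 < t k := by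
      intro k hk1 hkK
      have : ∀ m, 1 ≤ m → m ≤ K → t 1 ≤ t m := by
        intro m
        induction m with
        | zero => omega
        | succ n ih =>
          intro _ hnK
          rcases Nat.lt_or_ge 1 (n + 1) with hn | hn
          · have hn1 : 1 ≤ n := by omega
            have := hmono n hn1 (by omega)
            exact (ih hn1 (by omega)).trans this.le
          · have hn0 : n = 0 := by omega
            subst hn0
            exact le_rfl
      have := this k hk1 hkK
      rw [h1] at this; linarith
    have hstep : ∀ k, 2 ≤ k → k ≤ K → q * t k < t (k - 1) := by
      intro k hk2 hkK
      have hk := h k hk2 hkK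
      have htk := hpos k (by omega) hkK
      rw [div_lt_iff₀ htk] at hk
      nlinarith
    have hchain : ∀ j, 1 ≤ j → j ≤ K - 1 → q ^ j * t K < t (K - j) := by
      intro j
      induction j with
      | zero => omega
      | succ n ih =>
        intro _ hnK
        rcases Nat.lt_or_ge 1 (n + 1) with hn | hn
        · have hn1 : 1 ≤ n := by omega
          have h1' := ih hn1 (by omega)
          have h2' : q * t (K - n) < t (K - n - 1) := hstep (K - n) (by omega) (by omega)
          have : q ^ (n + 1) * t K = q * (q ^ n * t K) := by ring
          rw [this]
          have : q * (q ^ n * t K) < q * t (K - n) :=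
            (mul_lt_mul_iff_right₀ hq0).mpr h1'
          have hidx : K - (n + 1) = K - n - 1 := by omega
          rw [hidx]
          linarith
        · have hn0 : n = 0 := by omega
          subst hn0
          have := hstep K hK le_rfl
          simpa using this
    have hfinal := hchain (K - 1) (by omega) le_rfl
    have hidx : K - (K - 1) = 1 := by omega
    rw [hidx, hKT, h1, hqpow] at hfinal
    rw [div_mul_cancel₀ _ (ne_of_gt hT0)] at hfinal
    exact lt_irrefl _ hfinal
  · intro k hk2 hkK
    have ha0 : (0 : ℝ) < T / t₁ := div_pos hT0 ht₁
    have hq' : q = (T / t₁) ^ (-((1 : ℝ) / ((K : ℝ) - 1))) := by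
      rw [hqdef, ← inv_div T t₁, inv_rpow ha0.le, ← rpow_neg ha0.le]
    have hy : (T / t₁) ^ (((k : ℝ) - 2) / ((K : ℝ) - 1)) =
        (T / t₁) ^ (((k : ℝ) - 1) / ((K : ℝ) - 1)) * q := by
      rw [hq', ← rpow_add ha0]
      congr 1
      field_simp
      ring
    have hx0 : 0 < t₁ * (T / t₁) ^ (((k : ℝ) - 1) / ((K : ℝ) - 1)) :=
      mul_pos ht₁ (rpow_pos_of_pos ha0 _)
    rw [hy]
    field_simp
end
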